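/- arXiv:2001.10360 — 3 statements merged into one kernel-verified Lean document; each statement's English description precedes it below -/
import Mathlib

section
/- Let X be a rearrangement-invariant space over ℝⁿ, m < n, with t^{m/n − 1} χ_{(1,∞)}(t) ∈ X'(0,∞), and let X^m be the optimal rearrangement-invariant target space (the associate space of the norm σ_m(f) = ‖t^{m/n} f**(t)‖_{X'(0,∞)}). If u ∈ V^m X(ℝⁿ) and P, P̃ are two polynomials of degree at most m−1 such that both ‖u − P‖_{X^m} and ‖u − P̃‖_{X^m} are finite, then P − P̃ is a constant polynomial. Moreover, if the fundamental function φ_{X^m}(t) → ∞ as t → ∞, then P = P̃. -/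
open MeasureTheory ENNReal Set Filter

noncomputable section

/-- Euclidean space ℝⁿ. -/
abbrev Euc (n : ℕ) := EuclideanSpace ℝ (Fin n)

/-- Nonincreasing rearrangement of an `ℝ≥0∞`-valued function. -/
def rearrE {α : Type*} [MeasurableSpace α] (μ : Measure α) (f : α → ℝ≥0∞) (t : ℝ) : ℝ≥0∞ :=
  sInf {l : ℝ≥0∞ | μ {x | l < f x} ≤ ENNReal.ofReal t}

/-- Unsigned nonincreasing rearrangement `f*` of a real-valued function. -/
def rearr {α : Type*} [MeasurableSpace α] (μ : Measure α) (f : α → ℝ) (t : ℝ) : ℝ≥0∞ :=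
  rearrE μ (fun x => ENNReal.ofReal |f x|) t

/-- `u` is `m`-times weakly differentiable on ℝⁿ, with weak derivatives
`D k a` of order `k ≤ m` in the directions `a : Fin k → Fin n`. -/
def HasWeakDerivs (n m : ℕ) (u : Euc n → ℝ) (D : ∀ k : ℕ, (Fin k → Fin n) → Euc n → ℝ) : Prop :=
  LocallyIntegrable u volume ∧ (∀ a : Fin 0 → Fin n, D 0 a = u) ∧
    (∀ k (a : Fin k → Fin n), k ≤ m → LocallyIntegrable (D k a) volume) ∧
    ∀ k : ℕ, k ≤ m → ∀ (a : Fin k → Fin n) (φ : Euc n → ℝ),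
      ContDiff ℝ (⊤ : ℕ∞) φ → HasCompactSupport φ →
        ∫ x, u x * iteratedFDeriv ℝ k φ x (fun j => EuclideanSpace.single (a j) 1)
          = (-1 : ℝ) ^ k * ∫ x, D k a x * φ x

/-- The ℓ¹-norm `|∇^m u|` of the vector of all `m`-th order weak derivatives. -/
def gradAbs (n m : ℕ) (D : ∀ k : ℕ, (Fin k → Fin n) → Euc n → ℝ) (x : Euc n) : ℝ :=
  ∑ a : Fin m → Fin n, |D m a x|

/-- A rearrangement-invariant Banach function norm over `(α, μ)`, acting on
nonnegative extended-real valued measurable functions (axioms (P1)–(P6)). -/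
structure RINorm {α : Type*} [MeasurableSpace α] (μ : Measure α) where
  ρ : (α → ℝ≥0∞) → ℝ≥0∞
  ρ_zero : ρ (fun _ => 0) = 0
  ρ_eq_zero : ∀ f : α → ℝ≥0∞, Measurable f → ρ f = 0 → f =ᵐ[μ] 0
  ρ_smul : ∀ (c : ℝ≥0∞) (f : α → ℝ≥0∞), ρ (fun x => c * f x) = c * ρ f
  ρ_add : ∀ f g : α → ℝ≥0∞, ρ (fun x => f x + g x) ≤ ρ f + ρ g
  ρ_mono : ∀ f g : α → ℝ≥0∞, (∀ᵐ x ∂μ, f x ≤ g x) → ρ f ≤ ρ g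
  ρ_fatou : ∀ F : ℕ → α → ℝ≥0∞, (∀ k x, F k x ≤ F (k + 1) x) →
    ρ (fun x => ⨆ k, F k x) = ⨆ k, ρ (F k)
  ρ_chi : ∀ s : Set α, MeasurableSet s → μ s < ⊤ → ρ (s.indicator 1) < ⊤
  ρ_loc : ∀ s : Set α, MeasurableSet s → μ s < ⊤ →
    ∃ C : ℝ≥0∞, C ≠ ⊤ ∧ ∀ f : α → ℝ≥0∞, ∫⁻ x in s, f x ∂μ ≤ C * ρ f
  ρ_ri : ∀ f g : α → ℝ≥0∞, rearrE μ f = rearrE μ g → ρ f = ρ g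

/-- The associate norm ρ'(g) = sup { ∫ f g dμ : ρ(f) ≤ 1 }. -/
def RINorm.assoc {α : Type*} [MeasurableSpace α] {μ : Measure α} (N : RINorm μ)
    (g : α → ℝ≥0∞) : ℝ≥0∞ :=
  ⨆ (f : α → ℝ≥0∞) (_ : N.ρ f ≤ 1), ∫⁻ x, f x * g x ∂μ

/-- The norm of a real-valued function on `(β, ν)` in the r.i. space over ℝⁿ whose
representation norm over `(0,∞)` is `N` (Luxemburg representation): ‖f‖ = ρ(f*). -/
def riNorm {β : Type*} [MeasurableSpace β] (N : RINorm (volume.restrict (Ioi (0 : ℝ))))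
    (ν : Measure β) (f : β → ℝ) : ℝ≥0∞ :=
  N.ρ (rearr ν f)

/-- maximal rearrangement f**(t) = (1/t)∫₀^t f*(s) ds -/
def doubleStar {α : Type*} [MeasurableSpace α] (μ : Measure α) (f : α → ℝ) (t : ℝ) : ℝ≥0∞ :=
  (ENNReal.ofReal t)⁻¹ * ∫⁻ s in Ioo (0 : ℝ) t, rearr μ f s

/-- The condition t^{m/n-1}χ_{(1,∞)}(t) ∈ X'(0,∞). -/
def WeightCond (N : RINorm (volume.restrict (Ioi (0 : ℝ)))) (n m : ℕ) : Prop :=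
  N.assoc (fun t => ENNReal.ofReal (t ^ ((m : ℝ) / n - 1)) * (Ioi (1 : ℝ)).indicator 1 t) < ⊤

/-- The functional σ_m(f) = ‖t^{m/n} f**(t)‖_{X'(0,∞)}. -/
def sigmaNorm (N : RINorm (volume.restrict (Ioi (0 : ℝ)))) (n m : ℕ) (f : Euc n → ℝ) : ℝ≥0∞ :=
  N.assoc (fun t => ENNReal.ofReal (t ^ ((m : ℝ) / n)) * doubleStar volume f t)

/-- The norm of the optimal space X^m: the associate norm of σ_m over ℝⁿ. -/
def XmNorm (N : RINorm (volume.restrict (Ioi (0 : ℝ)))) (n m : ℕ) (g : Euc n → ℝ) : ℝ≥0∞ :=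
  ⨆ (f : Euc n → ℝ) (_ : sigmaNorm N n m f ≤ 1),
    ∫⁻ x, ENNReal.ofReal |g x| * ENNReal.ofReal |f x|

/-- Evaluation of a polynomial in n variables at a point of ℝⁿ. -/
def polyEval {n : ℕ} (P : MvPolynomial (Fin n) ℝ) (x : Euc n) : ℝ :=
  MvPolynomial.eval (fun i => x i) P

section AuxLemmas

variable {α : Type*} [MeasurableSpace α] {μ : Measure α}

lemma lintegral_mul_le_decomp' (F G G₁ G₂ : α → ℝ≥0∞) (h1 : AEMeasurable G₁ μ)
    (h2 : AEMeasurable G₂ μ) (hG : ∀ᵐ x ∂μ, G x ≤ G₁ x + G₂ x) :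
    ∫⁻ x, G x * F x ∂μ ≤ 2 * ∫⁻ x, G₁ x * F x ∂μ + 2 * ∫⁻ x, G₂ x * F x ∂μ := by
  set B₁ := h1.mk G₁ with hB₁
  set B₂ := h2.mk G₂ with hB₂
  have hG' : ∀ᵐ x ∂μ, G x ≤ B₁ x + B₂ x := by
    filter_upwards [hG, h1.ae_eq_mk, h2.ae_eq_mk] with x h e1 e2
    show G x ≤ AEMeasurable.mk G₁ h1 x + AEMeasurable.mk G₂ h2 x
    rw [← e1, ← e2]; exact h
  set A := {x | B₂ x ≤ B₁ x} with hA
  have hAm : MeasurableSet A := measurableSet_le h2.measurable_mk h1.measurable_mk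
  have key : ∀ (B G' : α → ℝ≥0∞) (s : Set α), Measurable B → (G' =ᵐ[μ] B) →
      (∀ᵐ x ∂(μ.restrict s), G x ≤ 2 * B x) →
      ∫⁻ x, G x * F x ∂(μ.restrict s) ≤ 2 * ∫⁻ x, G' x * F x ∂μ := by
    intro B G' s hB hGB hle
    calc ∫⁻ x, G x * F x ∂(μ.restrict s) ≤ ∫⁻ x, 2 * (B x * F x) ∂(μ.restrict s) := by
          refine lintegral_mono_ae (hle.mono fun x hx => ?_)
          calc G x * F x ≤ 2 * B x * F x := mul_le_mul_left hx _
            _ = 2 * (B x * F x) := mul_assoc _ _ _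
      _ ≤ ∫⁻ x, 2 * (B x * F x) ∂μ := lintegral_mono' Measure.restrict_le_self le_rfl
      _ = 2 * ∫⁻ x, B x * F x ∂μ := lintegral_const_mul' _ _ ofNat_ne_top
      _ = 2 * ∫⁻ x, G' x * F x ∂μ := by
          refine congrArg _ (lintegral_congr_ae (hGB.mono fun x hx => ?_))
          simp only [hx]
  have split : ∫⁻ x, G x * F x ∂μ
      = ∫⁻ x, G x * F x ∂(μ.restrict A) + ∫⁻ x, G x * F x ∂(μ.restrict Aᶜ) := by
    rw [← lintegral_add_measure, Measure.restrict_add_restrict_compl hAm]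
  rw [split]
  refine add_le_add ?_ ?_
  · refine key B₁ G₁ A h1.measurable_mk h1.ae_eq_mk ?_
    filter_upwards [ae_restrict_of_ae hG', ae_restrict_mem hAm] with x hx hxA
    exact hx.trans (by rw [two_mul]; exact add_le_add le_rfl hxA)
  · refine key B₂ G₂ Aᶜ h2.measurable_mk h2.ae_eq_mk ?_
    filter_upwards [ae_restrict_of_ae hG', ae_restrict_mem hAm.compl] with x hx hxA
    have : B₁ x ≤ B₂ x := le_of_not_ge hxA
    exact hx.trans (by rw [two_mul]; exact add_le_add this le_rfl)

lemma RINorm.le_assoc (N : RINorm μ) (g : α → ℝ≥0∞) {f : α → ℝ≥0∞} (hf : N.ρ f ≤ 1) :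
    ∫⁻ x, f x * g x ∂μ ≤ N.assoc g :=
  le_iSup₂ (f := fun f (_ : N.ρ f ≤ 1) => ∫⁻ x, f x * g x ∂μ) f hf

lemma RINorm.assoc_le_decomp (N : RINorm μ) {g g₁ g₂ : α → ℝ≥0∞} (h1 : Measurable g₁)
    (h2 : Measurable g₂) (hg : ∀ᵐ t ∂μ, g t ≤ g₁ t + g₂ t) :
    N.assoc g ≤ 2 * N.assoc g₁ + 2 * N.assoc g₂ := by
  refine iSup₂_le fun f hf => ?_
  have rw1 : ∀ h : α → ℝ≥0∞, ∫⁻ x, f x * h x ∂μ = ∫⁻ x, h x * f x ∂μ := fun h =>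
    lintegral_congr fun x => mul_comm _ _
  rw [rw1]
  refine (lintegral_mul_le_decomp' f g g₁ g₂ h1.aemeasurable h2.aemeasurable hg).trans ?_
  rw [← rw1 g₁, ← rw1 g₂]
  exact add_le_add (mul_le_mul_right (N.le_assoc g₁ hf) 2) (mul_le_mul_right (N.le_assoc g₂ hf) 2)

lemma RINorm.assoc_const_mul (N : RINorm μ) (k : ℝ≥0∞) (g : α → ℝ≥0∞) (hk : k ≠ ⊤) :
    N.assoc (fun t => k * g t) ≤ k * N.assoc g := by
  refine iSup₂_le fun f hf => ?_
  have : ∫⁻ t, f t * (k * g t) ∂μ = k * ∫⁻ t, f t * g t ∂μ := by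
    rw [← lintegral_const_mul' k _ hk]
    exact lintegral_congr fun t => mul_left_comm _ _ _
  rw [this]
  exact mul_le_mul_right (N.le_assoc g hf) k

lemma RINorm.assoc_indicator_lt_top (N : RINorm μ) {s : Set α} (hs : MeasurableSet s)
    (hμ : μ s < ⊤) : N.assoc (s.indicator 1) < ⊤ := by
  obtain ⟨C, hC, h⟩ := N.ρ_loc s hs hμ
  refine lt_of_le_of_lt (iSup₂_le fun f hf => ?_) hC.lt_top
  have : (fun x => f x * s.indicator 1 x) = s.indicator f := by
    funext x
    by_cases hx : x ∈ s <;> simp [hx]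
  rw [this, lintegral_indicator hs]
  exact (h f).trans (by simpa using mul_le_mul_right hf C)

end AuxLemmas
section RearrComp

variable {α : Type*} [MeasurableSpace α] {μ : Measure α}

lemma rearr_smul_ind {E : Set α} {c : ℝ} (hc : 0 < c) :
    rearr μ (fun x => c * E.indicator (fun _ => (1:ℝ)) x)
      = fun t => if ENNReal.ofReal t < μ E then ENNReal.ofReal c else 0 := by
  have hval : ∀ x, ENNReal.ofReal |c * E.indicator (fun _ => (1:ℝ)) x|
      = E.indicator (fun _ => ENNReal.ofReal c) x := by
    intro x; by_cases hx : x ∈ E <;> simp [hx, abs_of_pos hc]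
  have hset : ∀ l : ℝ≥0∞, {x | l < ENNReal.ofReal |c * E.indicator (fun _ => (1:ℝ)) x|}
      = if l < ENNReal.ofReal c then E else ∅ := by
    intro l
    ext x
    rw [mem_setOf_eq, hval x]
    by_cases hx : x ∈ E
    · simp only [indicator_of_mem hx]
      by_cases hl : l < ENNReal.ofReal c <;> simp [hl, hx]
    · simp only [indicator_of_notMem hx]
      by_cases hl : l < ENNReal.ofReal c <;> simp [hl, hx]
  funext t
  show rearrE μ _ t = _
  rw [rearrE]
  simp only [hset, apply_ite μ, measure_empty]
  by_cases h : μ E ≤ ENNReal.ofReal t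
  · rw [if_neg (not_lt.2 h)]
    have huniv : {l : ℝ≥0∞ | (if l < ENNReal.ofReal c then μ E else 0) ≤ ENNReal.ofReal t}
        = univ := by
      refine eq_univ_of_forall fun l => ?_
      simp only [mem_setOf_eq]
      split_ifs
      exacts [h, zero_le]
    rw [huniv, sInf_univ]
    rfl
  · rw [if_pos (not_le.1 h)]
    have hIci : {l : ℝ≥0∞ | (if l < ENNReal.ofReal c then μ E else 0) ≤ ENNReal.ofReal t}
        = Ici (ENNReal.ofReal c) := by
      ext l
      simp only [mem_setOf_eq, mem_Ici]
      split_ifs with h'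
      · exact iff_of_false h (not_le.2 h')
      · exact iff_of_true zero_le (not_lt.1 h')
    rw [hIci, csInf_Ici]

lemma doubleStar_smul_ind {E : Set α} {c : ℝ} (hc : 0 < c) (ha : μ E ≠ ⊤)
    {t : ℝ} (ht : 0 < t) :
    doubleStar μ (fun x => c * E.indicator (fun _ => (1:ℝ)) x) t
      = (ENNReal.ofReal t)⁻¹ * (ENNReal.ofReal c * ENNReal.ofReal (min t (μ E).toReal)) := by
  rw [doubleStar]
  congr 1
  have h1 : ∀ s, s ∈ Ioo (0:ℝ) t →
      rearr μ (fun x => c * E.indicator (fun _ => (1:ℝ)) x) s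
        = (Iio (μ E).toReal).indicator (fun _ => ENNReal.ofReal c) s := by
    intro s hs
    rw [rearr_smul_ind hc]
    show (if ENNReal.ofReal s < μ E then ENNReal.ofReal c else 0) = _
    by_cases h' : s < (μ E).toReal
    · rw [if_pos ((ENNReal.ofReal_lt_iff_lt_toReal hs.1.le ha).2 h'), indicator_of_mem (mem_Iio.2 h')]
    · rw [if_neg (fun hh => h' ((ENNReal.ofReal_lt_iff_lt_toReal hs.1.le ha).1 hh)),
        indicator_of_notMem (fun hm => h' (mem_Iio.1 hm))]
  rw [setLIntegral_congr_fun measurableSet_Ioo h1,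
    lintegral_indicator measurableSet_Iio, setLIntegral_const,
    Measure.restrict_apply measurableSet_Iio]
  have hint : Iio (μ E).toReal ∩ Ioo 0 t = Ioo 0 (min t (μ E).toReal) := by
    ext s
    constructor
    · rintro ⟨h1, h2, h3⟩; exact ⟨h2, lt_min h3 h1⟩
    · rintro ⟨h2, h3⟩; exact ⟨(lt_min_iff.1 h3).2, h2, (lt_min_iff.1 h3).1⟩
  rw [hint, Real.volume_Ioo, sub_zero]

end RearrComp
section SigmaBound

/-- the weight function of `WeightCond` -/
def wfun (n m : ℕ) : ℝ → ℝ≥0∞ :=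
  fun t => ENNReal.ofReal (t ^ ((m : ℝ) / n - 1)) * (Ioi (1 : ℝ)).indicator 1 t

lemma wfun_measurable (n m : ℕ) : Measurable (wfun n m) := by
  have : wfun n m = (Ioi (1:ℝ)).indicator
      (fun t => ENNReal.ofReal (Real.exp (Real.log t * ((m : ℝ) / n - 1)))) := by
    funext t
    by_cases ht : t ∈ Ioi (1:ℝ)
    · rw [wfun, indicator_of_mem ht, indicator_of_mem ht,
        Real.rpow_def_of_pos (lt_trans one_pos ht)]
      simp
    · rw [wfun, indicator_of_notMem ht, indicator_of_notMem ht, mul_zero]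
  rw [this]
  exact (((Real.measurable_log.mul_const _).exp).ennreal_ofReal).indicator measurableSet_Ioi

lemma sigma_smul_ind_le (N : RINorm (volume.restrict (Ioi (0 : ℝ)))) {n m : ℕ}
    (hn : 0 < n) (hmn : m ≤ n) {c : ℝ} (hc : 0 < c) {E : Set (Euc n)}
    (hEt : volume E ≤ ENNReal.ofReal (3/2)) :
    sigmaNorm N n m (fun x => c * E.indicator (fun _ => (1:ℝ)) x)
      ≤ ENNReal.ofReal ((3/2) * c) *
        (2 * N.assoc ((Ioc (0:ℝ) (3/2)).indicator 1) + 2 * N.assoc (wfun n m)) := by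
  set q : ℝ := (m : ℝ) / n with hq
  have hq0 : 0 ≤ q := div_nonneg (Nat.cast_nonneg _) (Nat.cast_nonneg _)
  have hq1 : q ≤ 1 := by
    rw [hq, div_le_one (by exact_mod_cast hn)]
    exact_mod_cast hmn
  have ha : volume E ≠ ⊤ := ne_top_of_le_ne_top ofReal_ne_top hEt
  set a' : ℝ := (volume E).toReal with ha'def
  have ha32 : a' ≤ 3/2 := ENNReal.toReal_le_of_le_ofReal (by norm_num) hEt
  set kk : ℝ≥0∞ := ENNReal.ofReal ((3/2) * c) with hkk
  set χ : ℝ → ℝ≥0∞ := (Ioc (0:ℝ) (3/2)).indicator 1 with hχ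
  have hbound : ∀ᵐ t ∂(volume.restrict (Ioi (0:ℝ))),
      ENNReal.ofReal (t ^ q) * doubleStar volume (fun x => c * E.indicator (fun _ => (1:ℝ)) x) t
        ≤ kk * χ t + kk * wfun n m t := by
    filter_upwards [ae_restrict_mem measurableSet_Ioi] with t ht
    rw [doubleStar_smul_ind hc ha ht]
    by_cases h32 : t ≤ 3/2
    · have hmem : t ∈ Ioc (0:ℝ) (3/2) := ⟨ht, h32⟩
      have hχ1 : χ t = 1 := indicator_of_mem hmem _
      have key : ENNReal.ofReal (t ^ q) *
          ((ENNReal.ofReal t)⁻¹ * (ENNReal.ofReal c * ENNReal.ofReal (min t a'))) ≤ kk := by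
        have e : ENNReal.ofReal (t ^ q) *
            ((ENNReal.ofReal t)⁻¹ * (ENNReal.ofReal c * ENNReal.ofReal (min t a')))
            = (ENNReal.ofReal (t ^ q) * ENNReal.ofReal c) *
              (ENNReal.ofReal (min t a') * (ENNReal.ofReal t)⁻¹) := by ring
        have h1 : ENNReal.ofReal (min t a') * (ENNReal.ofReal t)⁻¹ ≤ 1 := by
          refine le_trans (mul_le_mul_left (ENNReal.ofReal_le_ofReal (min_le_left _ _)) _) ?_
          rw [ENNReal.mul_inv_cancel (ENNReal.ofReal_pos.2 ht).ne' ofReal_ne_top]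
        have h2 : ENNReal.ofReal (t ^ q) ≤ ENNReal.ofReal (3/2) := by
          refine ENNReal.ofReal_le_ofReal ?_
          calc t ^ q ≤ (3/2 : ℝ) ^ q := Real.rpow_le_rpow (le_of_lt ht) h32 hq0
            _ ≤ (3/2 : ℝ) ^ (1:ℝ) := Real.rpow_le_rpow_of_exponent_le (by norm_num) hq1
            _ = 3/2 := Real.rpow_one _
        rw [e, hkk, ENNReal.ofReal_mul (by norm_num)]
        calc (ENNReal.ofReal (t ^ q) * ENNReal.ofReal c) *
              (ENNReal.ofReal (min t a') * (ENNReal.ofReal t)⁻¹)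
            ≤ (ENNReal.ofReal (3/2) * ENNReal.ofReal c) * 1 :=
              mul_le_mul' (mul_le_mul_left h2 _) h1
          _ = ENNReal.ofReal (3/2) * ENNReal.ofReal c := mul_one _
      calc _ ≤ kk := key
        _ ≤ kk * χ t + kk * wfun n m t := by rw [hχ1, mul_one]; exact self_le_add_right _ _
    · push_neg at h32
      have ht1 : (1:ℝ) < t := lt_trans (by norm_num) h32
      have hmin : min t a' = a' := min_eq_right (ha32.trans h32.le)
      have hw : wfun n m t = ENNReal.ofReal (t ^ (q - 1)) := by
        rw [wfun, indicator_of_mem (mem_Ioi.2 ht1)]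
        simp [hq]
      have hrw : ENNReal.ofReal (t ^ q) * (ENNReal.ofReal t)⁻¹ = ENNReal.ofReal (t ^ (q - 1)) := by
        rw [Real.rpow_sub ht, Real.rpow_one, ENNReal.ofReal_div_of_pos ht, div_eq_mul_inv]
      have e : ENNReal.ofReal (t ^ q) *
          ((ENNReal.ofReal t)⁻¹ * (ENNReal.ofReal c * ENNReal.ofReal (min t a')))
          = (ENNReal.ofReal c * ENNReal.ofReal (min t a')) *
            (ENNReal.ofReal (t ^ q) * (ENNReal.ofReal t)⁻¹) := by ring
      rw [e, hrw, hmin]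
      have : ENNReal.ofReal c * ENNReal.ofReal a' ≤ kk := by
        rw [hkk, ENNReal.ofReal_mul (by norm_num), mul_comm]
        exact mul_le_mul_left (ENNReal.ofReal_le_ofReal ha32) _
      calc ENNReal.ofReal c * ENNReal.ofReal a' * ENNReal.ofReal (t ^ (q-1))
          ≤ kk * ENNReal.ofReal (t ^ (q-1)) := mul_le_mul_left this _
        _ = kk * wfun n m t := by rw [hw]
        _ ≤ kk * χ t + kk * wfun n m t := self_le_add_left _ _
  have hm1 : Measurable fun t => kk * χ t :=
    (measurable_one.indicator measurableSet_Ioc).const_mul kk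
  have hm2 : Measurable fun t => kk * wfun n m t := (wfun_measurable n m).const_mul kk
  refine le_trans (N.assoc_le_decomp hm1 hm2 hbound) ?_
  have e1 : 2 * N.assoc (fun t => kk * χ t) + 2 * N.assoc (fun t => kk * wfun n m t)
      ≤ 2 * (kk * N.assoc χ) + 2 * (kk * N.assoc (wfun n m)) := by
    gcongr
    · exact N.assoc_const_mul kk χ ofReal_ne_top
    · exact N.assoc_const_mul kk (wfun n m) ofReal_ne_top
  refine e1.trans (le_of_eq ?_)
  ring

lemma exists_good_c (N : RINorm (volume.restrict (Ioi (0 : ℝ)))) {n m : ℕ}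
    (hn : 0 < n) (hmn : m ≤ n) (hX : WeightCond N n m) :
    ∃ c : ℝ, 0 < c ∧ ∀ E : Set (Euc n), volume E ≤ ENNReal.ofReal (3/2) →
      sigmaNorm N n m (fun x => c * E.indicator (fun _ => (1:ℝ)) x) ≤ 1 := by
  set M : ℝ≥0∞ := 2 * N.assoc ((Ioc (0:ℝ) (3/2)).indicator 1) + 2 * N.assoc (wfun n m) with hM
  have hMfin : M ≠ ⊤ := by
    have h1 : N.assoc ((Ioc (0:ℝ) (3/2)).indicator 1) < ⊤ := by
      refine N.assoc_indicator_lt_top measurableSet_Ioc ?_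
      rw [Measure.restrict_apply measurableSet_Ioc]
      exact lt_of_le_of_lt (measure_mono inter_subset_left)
        (by rw [Real.volume_Ioc]; exact ofReal_lt_top)
    have h2 : N.assoc (wfun n m) < ⊤ := hX
    exact ENNReal.add_ne_top.2 ⟨ENNReal.mul_ne_top ofNat_ne_top h1.ne,
      ENNReal.mul_ne_top ofNat_ne_top h2.ne⟩
  refine ⟨(2/3) * (M.toReal + 1)⁻¹, by positivity, fun E hEt => ?_⟩
  have hMR : (0:ℝ) < M.toReal + 1 := by positivity
  refine (sigma_smul_ind_le N hn hmn (by positivity) hEt).trans ?_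
  have e : (3/2 : ℝ) * ((2/3) * (M.toReal + 1)⁻¹) = (M.toReal + 1)⁻¹ := by ring
  rw [e]
  calc ENNReal.ofReal (M.toReal + 1)⁻¹ * M
      ≤ ENNReal.ofReal (M.toReal + 1)⁻¹ * ENNReal.ofReal (M.toReal + 1) := by
        refine mul_le_mul_right ?_ _
        conv_lhs => rw [← ENNReal.ofReal_toReal hMfin]
        exact ENNReal.ofReal_le_ofReal (by linarith)
    _ = 1 := by
        rw [← ENNReal.ofReal_mul (by positivity), inv_mul_cancel₀ hMR.ne']
        exact ENNReal.ofReal_one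

end SigmaBound
section PolyMeasure

lemma poly_slice_top (q : Polynomial ℝ) (hq : 0 < q.degree) (l : ℝ) :
    volume {t : ℝ | l < |q.eval t|} = ⊤ := by
  obtain ⟨T, hT⟩ :=
    Filter.eventually_atTop.1 ((Polynomial.abs_tendsto_atTop q hq).eventually_gt_atTop l)
  rw [← top_le_iff, ← Real.volume_Ici (a := T)]
  exact measure_mono fun t ht => hT t ht

lemma nonconst_exists_degreeOf (n : ℕ) (p : MvPolynomial (Fin n) ℝ)
    (hp : ∀ c : ℝ, p ≠ MvPolynomial.C c) : ∃ i, 0 < p.degreeOf i := by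
  by_contra h
  push_neg at h
  refine hp (p.coeff 0) ?_
  apply MvPolynomial.ext
  intro m
  by_cases hm : m = 0
  · subst hm; simp [MvPolynomial.coeff_C]
  · have hms : m ∉ p.support := by
      intro hin
      obtain ⟨x, hx⟩ : ∃ x, m x ≠ 0 := by
        by_contra h'
        push_neg at h'
        exact hm (Finsupp.ext h')
      have h1 : m x ≤ p.degreeOf x := by
        rw [MvPolynomial.degreeOf_eq_sup]
        exact Finset.le_sup (f := fun m' => m' x) hin
      have h2 := h x
      omega
  
    rw [MvPolynomial.notMem_support_iff.1 hms, MvPolynomial.coeff_C, if_neg (Ne.symm hm)]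

lemma nonconst_pi_measure_top (n' : ℕ) (p : MvPolynomial (Fin (n' + 1)) ℝ)
    (hp : ∀ c : ℝ, p ≠ MvPolynomial.C c) (l : ℝ) :
    volume {y : Fin (n' + 1) → ℝ | l < |MvPolynomial.eval y p|} = ⊤ := by
  obtain ⟨i, hi⟩ := nonconst_exists_degreeOf _ p hp
  set e : Equiv.Perm (Fin (n' + 1)) := Equiv.swap i 0 with he
  set p₁ := MvPolynomial.rename (⇑e) p with hp₁
  have h0 : 0 < MvPolynomial.degreeOf 0 p₁ := by
    have h := MvPolynomial.degreeOf_rename_of_injective (p := p) (f := ⇑e) e.injective i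
    rw [hp₁]
    rw [show e i = 0 from Equiv.swap_apply_left i 0] at h
    rw [h]
    exact hi
  set P' := MvPolynomial.finSuccEquiv ℝ n' p₁ with hP'
  have hd : 0 < P'.natDegree := by
    rw [hP', MvPolynomial.natDegree_finSuccEquiv]; exact h0
  have hP'0 : P' ≠ 0 := fun h => by simp [h] at hd
  have hlead : P'.coeff P'.natDegree ≠ 0 := by
    rw [Polynomial.coeff_natDegree]
    exact Polynomial.leadingCoeff_ne_zero.2 hP'0
  obtain ⟨y₀, hy₀⟩ : ∃ y₀ : Fin n' → ℝ, MvPolynomial.eval y₀ (P'.coeff P'.natDegree) ≠ 0 := by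
    by_contra h
    push_neg at h
    exact hlead (MvPolynomial.funext fun y => by rw [h y, map_zero])
  set U := (fun y : Fin n' → ℝ => MvPolynomial.eval y (P'.coeff P'.natDegree)) ⁻¹' {(0:ℝ)}ᶜ
    with hU
  have hUopen : IsOpen U :=
    isOpen_compl_singleton.preimage (MvPolynomial.continuous_eval _)
  have hUpos : 0 < volume U := hUopen.measure_pos volume ⟨y₀, hy₀⟩
  set qy : (Fin n' → ℝ) → Polynomial ℝ := fun y => P'.map (MvPolynomial.eval y) with hqy
  have heval : ∀ (t : ℝ) (y : Fin n' → ℝ),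
      MvPolynomial.eval (Fin.cons t y) p₁ = (qy y).eval t := by
    intro t y
    rw [hqy]
    exact MvPolynomial.eval_eq_eval_mv_eval' y t p₁
  have hdeg : ∀ y ∈ U, 0 < (qy y).degree := by
    intro y hy
    have hco : (qy y).coeff P'.natDegree ≠ 0 := by
      rw [hqy]
      simpa [Polynomial.coeff_map] using (show MvPolynomial.eval y (P'.coeff P'.natDegree) ≠ 0 from hy)
    calc (0 : WithBot ℕ) < (P'.natDegree : WithBot ℕ) := by exact_mod_cast hd
      _ ≤ (qy y).degree := Polynomial.le_degree_of_ne_zero hco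
  set T : Set (ℝ × (Fin n' → ℝ)) := {z | l < |MvPolynomial.eval (Fin.cons z.1 z.2) p₁|} with hT
  have hcont : Continuous fun z : ℝ × (Fin n' → ℝ) =>
      MvPolynomial.eval (Fin.cons z.1 z.2) p₁ := by
    refine (MvPolynomial.continuous_eval p₁).comp ?_
    refine continuous_pi fun j => ?_
    refine Fin.cases ?_ ?_ j
    · simpa using continuous_fst
    · intro k; exact (continuous_apply k).comp continuous_snd
  have hTmeas : MeasurableSet T := (isOpen_lt continuous_const hcont.abs).measurableSet
  have hslice : ∀ y ∈ U, volume {t : ℝ | (t, y) ∈ T} = ⊤ := by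
    intro y hy
    have hst : {t : ℝ | (t, y) ∈ T} = {t : ℝ | l < |(qy y).eval t|} := by
      ext t
      simp only [hT, mem_setOf_eq, heval]
    rw [hst]
    exact poly_slice_top (qy y) (hdeg y hy) l
  have hTtop : (volume : Measure (ℝ × (Fin n' → ℝ))) T = ⊤ := by
    rw [Measure.volume_eq_prod, Measure.prod_apply_symm hTmeas]
    refine top_le_iff.1 ?_
    have hmono : ∀ y, U.indicator (fun _ => (⊤ : ℝ≥0∞)) y
        ≤ volume ((fun t => (t, y)) ⁻¹' T) := by
      intro y
      by_cases hy : y ∈ U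
      · rw [indicator_of_mem hy, show ((fun t => (t, y)) ⁻¹' T) = {t | (t, y) ∈ T} from rfl,
          hslice y hy]
      · rw [indicator_of_notMem hy]; exact zero_le
    calc (⊤:ℝ≥0∞) = ⊤ * volume U := (ENNReal.top_mul hUpos.ne').symm
      _ = ∫⁻ y, U.indicator (fun _ => ⊤) y := by
          rw [lintegral_indicator_const hUopen.measurableSet]
      _ ≤ _ := lintegral_mono hmono
  have hΦ := volume_preserving_piFinSuccAbove (fun _ : Fin (n' + 1) => ℝ) 0
  have hS₁ : {y : Fin (n' + 1) → ℝ | l < |MvPolynomial.eval y p₁|}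
      = (MeasurableEquiv.piFinSuccAbove (fun _ : Fin (n' + 1) => ℝ) 0) ⁻¹' T := by
    ext y
    simp only [mem_preimage, hT, mem_setOf_eq, MeasurableEquiv.piFinSuccAbove_apply,
      Fin.insertNthEquiv_symm_apply, Fin.removeNth_zero, Fin.cons_self_tail]
  have hS₁top : volume {y : Fin (n' + 1) → ℝ | l < |MvPolynomial.eval y p₁|} = ⊤ := by
    rw [hS₁, hΦ.measure_preimage hTmeas.nullMeasurableSet]
    exact hTtop
  -- transfer along the permutation e
  have hΦ₂ := volume_measurePreserving_piCongrLeft (fun _ : Fin (n' + 1) => ℝ) e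
  have hS₂ : {y : Fin (n' + 1) → ℝ | l < |MvPolynomial.eval y p₁|}
      = (MeasurableEquiv.piCongrLeft (fun _ : Fin (n' + 1) => ℝ) e) ⁻¹'
        {x : Fin (n' + 1) → ℝ | l < |MvPolynomial.eval x p|} := by
    ext y
    have happ : (MeasurableEquiv.piCongrLeft (fun _ : Fin (n' + 1) => ℝ) e) y
        = y ∘ ⇑e := by
      funext b
      conv_lhs => rw [← e.apply_symm_apply b]
      rw [MeasurableEquiv.piCongrLeft_apply_apply]
      rw [show e.symm = e from Equiv.symm_swap i 0]
      rfl
    simp only [mem_preimage, mem_setOf_eq, happ, hp₁, MvPolynomial.eval_rename]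
  have hmeasS : MeasurableSet {x : Fin (n' + 1) → ℝ | l < |MvPolynomial.eval x p|} :=
    (isOpen_lt continuous_const (MvPolynomial.continuous_eval p).abs).measurableSet
  rw [← hΦ₂.measure_preimage hmeasS.nullMeasurableSet, ← hS₂]
  exact hS₁top

end PolyMeasure
section CubePartition

lemma finset_shrink {ι : Type*} (g : ι → ℝ≥0∞) (hg : ∀ i, g i ≤ 1) (F : Finset ι)
    (hF : ENNReal.ofReal (1/2) < ∑ i ∈ F, g i) :
    ∃ G ⊆ F, ENNReal.ofReal (1/2) < ∑ i ∈ G, g i ∧ ∑ i ∈ G, g i ≤ ENNReal.ofReal (3/2) := by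
  classical
  induction F using Finset.strongInductionOn with
  | _ F ih =>
    by_cases hle : ∑ i ∈ F, g i ≤ ENNReal.ofReal (3/2)
    · exact ⟨F, subset_rfl, hF, hle⟩
    · push_neg at hle
      have hne : F.Nonempty := by
        rcases F.eq_empty_or_nonempty with h | h
        · exfalso; rw [h, Finset.sum_empty] at hle; simp at hle
        · exact h
      obtain ⟨x, hx⟩ := hne
      have hsum : ∑ i ∈ F.erase x, g i + g x = ∑ i ∈ F, g i := Finset.sum_erase_add F g hx
      have h1 : ENNReal.ofReal (1/2) < ∑ i ∈ F.erase x, g i := by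
        by_contra hcon
        push_neg at hcon
        have hcontra : ∑ i ∈ F, g i ≤ ENNReal.ofReal (3/2) := by
          rw [← hsum]
          calc ∑ i ∈ F.erase x, g i + g x ≤ ENNReal.ofReal (1/2) + 1 := add_le_add hcon (hg x)
            _ = ENNReal.ofReal (3/2) := by
                rw [← ENNReal.ofReal_one, ← ENNReal.ofReal_add (by norm_num) (by norm_num)]
                norm_num
        exact absurd hcontra (not_le.2 hle)
      obtain ⟨G, hG1, hG2, hG3⟩ := ih (F.erase x) (Finset.erase_ssubset hx) h1
      exact ⟨G, hG1.trans (Finset.erase_subset x F), hG2, hG3⟩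

lemma exists_subset_measure_mem_Icc {n : ℕ} {S : Set (Euc n)} (hS : MeasurableSet S)
    (htop : volume S = ⊤) :
    ∃ E : Set (Euc n), E ⊆ S ∧ MeasurableSet E ∧
      ENNReal.ofReal (1/2) ≤ volume E ∧ volume E ≤ ENNReal.ofReal (3/2) := by
  classical
  have hcoord : ∀ i : Fin n, Measurable fun x : Euc n => x i := fun i =>
    (measurable_pi_apply i).comp (MeasurableEquiv.toLp 2 (Fin n → ℝ)).symm.measurable
  set F : Euc n → (Fin n → ℤ) := fun x i => ⌊x i⌋ with hF
  have hFm : Measurable F := measurable_pi_iff.2 fun i => Int.measurable_floor.comp (hcoord i)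
  set C : (Fin n → ℤ) → Set (Euc n) := fun z => F ⁻¹' {z} with hC
  have hsing : ∀ z : Fin n → ℤ, MeasurableSet ({z} : Set (Fin n → ℤ)) := by
    intro z
    have : ({z} : Set (Fin n → ℤ)) = ⋂ i, (fun w : Fin n → ℤ => w i) ⁻¹' {z i} := by
      ext w
      simp [funext_iff]
    rw [this]
    exact MeasurableSet.iInter fun i => (measurable_pi_apply i) (measurableSet_singleton _)
  have hCm : ∀ z, MeasurableSet (C z) := fun z => hFm (hsing z)
  have hCvol : ∀ z, volume (C z) ≤ 1 := by
    intro z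
    have hceq : C z = (MeasurableEquiv.toLp 2 (Fin n → ℝ)).symm ⁻¹'
        (univ.pi fun i => Ico ((z i : ℝ)) ((z i : ℝ) + 1)) := by
      ext x
      simp only [hC, hF, mem_preimage, mem_singleton_iff, funext_iff, Set.mem_pi, mem_univ,
        forall_true_left, mem_Ico]
      refine forall_congr' fun i => ?_
      exact Int.floor_eq_iff
    rw [hceq, (EuclideanSpace.volume_preserving_symm_measurableEquiv_toLp
      (Fin n)).measure_preimage ((MeasurableSet.univ_pi fun i =>
        measurableSet_Ico).nullMeasurableSet), volume_pi_pi]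
    refine le_of_eq ?_
    have : ∀ i : Fin n, volume (Ico ((z i : ℝ)) ((z i : ℝ) + 1)) = 1 := by
      intro i
      rw [Real.volume_Ico]
      simp
    simp [this]
  have hdis : Pairwise (Function.onFun Disjoint fun z => S ∩ C z) := by
    intro z z' hzz'
    refine Set.disjoint_left.2 fun x hx hx' => hzz' ?_
    have h1 : F x = z := hx.2
    have h2 : F x = z' := hx'.2
    rw [← h1, h2]
  have hcover : (⋃ z, (S ∩ C z)) = S := by
    refine subset_antisymm (iUnion_subset fun z => inter_subset_left) fun x hx => ?_
    exact mem_iUnion.2 ⟨F x, hx, rfl⟩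
  have htsum : ∑' z : Fin n → ℤ, volume (S ∩ C z) = ⊤ := by
    rw [← measure_iUnion hdis fun z => hS.inter (hCm z), hcover, htop]
  obtain ⟨Fs, hFs⟩ : ∃ Fs : Finset (Fin n → ℤ),
      ENNReal.ofReal (1/2) < ∑ z ∈ Fs, volume (S ∩ C z) := by
    have : ENNReal.ofReal (1/2) < ⨆ s : Finset (Fin n → ℤ), ∑ z ∈ s, volume (S ∩ C z) := by
      rw [← ENNReal.tsum_eq_iSup_sum, htsum]
      exact ofReal_lt_top
    exact lt_iSup_iff.1 this
  obtain ⟨G, hG1, hG2, hG3⟩ := finset_shrink (fun z => volume (S ∩ C z))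
    (fun z => le_trans (measure_mono inter_subset_right) (hCvol z)) Fs hFs
  refine ⟨⋃ z ∈ G, (S ∩ C z), ?_, ?_, ?_, ?_⟩
  · exact iUnion₂_subset fun z _ => inter_subset_left
  · exact G.measurableSet_biUnion fun z _ => hS.inter (hCm z)
  · rw [measure_biUnion_finset (hdis.set_pairwise _) fun z _ => hS.inter (hCm z)]
    exact hG2.le
  · rw [measure_biUnion_finset (hdis.set_pairwise _) fun z _ => hS.inter (hCm z)]
    exact hG3

end CubePartition
section XmNormLemmas

lemma le_XmNorm (N : RINorm (volume.restrict (Ioi (0 : ℝ)))) (n m : ℕ) (g : Euc n → ℝ)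
    {f : Euc n → ℝ} (hf : sigmaNorm N n m f ≤ 1) :
    ∫⁻ x, ENNReal.ofReal |g x| * ENNReal.ofReal |f x| ≤ XmNorm N n m g :=
  le_iSup₂ (f := fun f (_ : sigmaNorm N n m f ≤ 1) =>
    ∫⁻ x, ENNReal.ofReal |g x| * ENNReal.ofReal |f x|) f hf

lemma XmNorm_le_decomp (N : RINorm (volume.restrict (Ioi (0 : ℝ)))) (n m : ℕ)
    {g g₁ g₂ : Euc n → ℝ} (h1 : AEMeasurable g₁ (volume : Measure (Euc n)))
    (h2 : AEMeasurable g₂ (volume : Measure (Euc n)))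
    (hg : ∀ x, |g x| ≤ |g₁ x| + |g₂ x|) :
    XmNorm N n m g ≤ 2 * XmNorm N n m g₁ + 2 * XmNorm N n m g₂ := by
  refine iSup₂_le fun f hf => ?_
  have hae : ∀ᵐ x ∂(volume : Measure (Euc n)),
      ENNReal.ofReal |g x| ≤ ENNReal.ofReal |g₁ x| + ENNReal.ofReal |g₂ x| :=
    Eventually.of_forall fun x => by
      rw [← ENNReal.ofReal_add (abs_nonneg _) (abs_nonneg _)]
      exact ENNReal.ofReal_le_ofReal (hg x)
  have hm1 : AEMeasurable (fun x => ENNReal.ofReal |g₁ x|) (volume : Measure (Euc n)) :=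
    ENNReal.measurable_ofReal.comp_aemeasurable (continuous_abs.measurable.comp_aemeasurable h1)
  have hm2 : AEMeasurable (fun x => ENNReal.ofReal |g₂ x|) (volume : Measure (Euc n)) :=
    ENNReal.measurable_ofReal.comp_aemeasurable (continuous_abs.measurable.comp_aemeasurable h2)
  refine (lintegral_mul_le_decomp' (fun x => ENNReal.ofReal |f x|) _ _ _ hm1 hm2 hae).trans ?_
  exact add_le_add (mul_le_mul_right (le_XmNorm N n m g₁ hf) 2)
    (mul_le_mul_right (le_XmNorm N n m g₂ hf) 2)

lemma XmNorm_eq_top_of_slices (N : RINorm (volume.restrict (Ioi (0 : ℝ)))) {n m : ℕ}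
    (hn : 0 < n) (hmn : m ≤ n) (hX : WeightCond N n m)
    (p : Euc n → ℝ) (hpm : Measurable p)
    (hp : ∀ l : ℝ, volume {x : Euc n | l < |p x|} = ⊤) :
    XmNorm N n m p = ⊤ := by
  obtain ⟨c, hc, hcσ⟩ := exists_good_c N hn hmn hX
  have key : ∀ k : ℕ, (ENNReal.ofReal c * ENNReal.ofReal (1/2)) * k ≤ XmNorm N n m p := by
    intro k
    have hSm : MeasurableSet {x : Euc n | (k:ℝ) < |p x|} :=
      measurableSet_lt measurable_const hpm.abs
    obtain ⟨E, hES, hEm, hElo, hEhi⟩ := exists_subset_measure_mem_Icc hSm (hp k)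
    set f : Euc n → ℝ := fun x => c * E.indicator (fun _ => (1:ℝ)) x with hf
    have hσ : sigmaNorm N n m f ≤ 1 := hcσ E hEhi
    have hineq : ∀ x, E.indicator (fun _ => (k:ℝ≥0∞) * ENNReal.ofReal c) x
        ≤ ENNReal.ofReal |p x| * ENNReal.ofReal |f x| := by
      intro x
      by_cases hx : x ∈ E
      · rw [indicator_of_mem hx]
        have h1 : (k:ℝ) < |p x| := hES hx
        have h2 : |f x| = c := by
          rw [hf]
          simp [indicator_of_mem hx, abs_of_pos hc]
        rw [h2]
        refine mul_le_mul_left ?_ _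
        rw [← ENNReal.ofReal_natCast k]
        exact ENNReal.ofReal_le_ofReal h1.le
      · rw [indicator_of_notMem hx]; exact zero_le
    calc (ENNReal.ofReal c * ENNReal.ofReal (1/2)) * k
        ≤ ((k:ℝ≥0∞) * ENNReal.ofReal c) * volume E := by
          calc (ENNReal.ofReal c * ENNReal.ofReal (1/2)) * k
              = ((k:ℝ≥0∞) * ENNReal.ofReal c) * ENNReal.ofReal (1/2) := by ring
            _ ≤ ((k:ℝ≥0∞) * ENNReal.ofReal c) * volume E := mul_le_mul_right hElo _
      _ = ∫⁻ x, E.indicator (fun _ => (k:ℝ≥0∞) * ENNReal.ofReal c) x :=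
          (lintegral_indicator_const hEm _).symm
      _ ≤ ∫⁻ x, ENNReal.ofReal |p x| * ENNReal.ofReal |f x| := lintegral_mono hineq
      _ ≤ XmNorm N n m p := le_XmNorm N n m p hσ
  have hδ : (ENNReal.ofReal c * ENNReal.ofReal (1/2)) ≠ 0 := by
    refine mul_ne_zero ?_ ?_ <;> simp [ENNReal.ofReal_pos.2, hc, (by norm_num : (0:ℝ) < 1/2)]
  refine top_unique ?_
  calc (⊤:ℝ≥0∞) = (ENNReal.ofReal c * ENNReal.ofReal (1/2)) * ⊤ := (ENNReal.mul_top hδ).symm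
    _ = (ENNReal.ofReal c * ENNReal.ofReal (1/2)) * ⨆ k : ℕ, (k:ℝ≥0∞) := by
        rw [ENNReal.iSup_natCast]
    _ = ⨆ k : ℕ, (ENNReal.ofReal c * ENNReal.ofReal (1/2)) * k := ENNReal.mul_iSup _ _
    _ ≤ XmNorm N n m p := iSup_le key

lemma polyEval_measure_top {n' : ℕ} (p : MvPolynomial (Fin (n' + 1)) ℝ)
    (hp : ∀ c : ℝ, p ≠ MvPolynomial.C c) (l : ℝ) :
    volume {x : Euc (n' + 1) | l < |polyEval p x|} = ⊤ := by
  have hmeas : MeasurableSet {y : Fin (n' + 1) → ℝ | l < |MvPolynomial.eval y p|} :=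
    (isOpen_lt continuous_const (MvPolynomial.continuous_eval p).abs).measurableSet
  have hset : {x : Euc (n' + 1) | l < |polyEval p x|}
      = (MeasurableEquiv.toLp 2 (Fin (n' + 1) → ℝ)).symm ⁻¹'
        {y : Fin (n' + 1) → ℝ | l < |MvPolynomial.eval y p|} := rfl
  rw [hset, (EuclideanSpace.volume_preserving_symm_measurableEquiv_toLp
    (Fin (n' + 1))).measure_preimage hmeas.nullMeasurableSet]
  exact nonconst_pi_measure_top n' p hp l

end XmNormLemmas
lemma polyEval_continuous {n : ℕ} (P : MvPolynomial (Fin n) ℝ) : Continuous (polyEval P) :=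
  (MvPolynomial.continuous_eval P).comp (PiLp.continuous_ofLp 2 (fun _ : Fin n => ℝ))

/-- (Uniqueness part of the main theorem.) Under the natural assumption on X,
if u ∈ V^m X(ℝⁿ) and P, P̃ are polynomials of degree ≤ m−1 with ‖u−P‖_{X^m} < ∞ and
‖u−P̃‖_{X^m} < ∞, then P − P̃ is a constant polynomial; and if the fundamental function of
X^m tends to ∞ at ∞, then P = P̃. -/
theorem stmt_5 (n m : ℕ) (hn : 2 ≤ n) (hm : 0 < m) (hmn : m < n)
    (N : RINorm (volume.restrict (Ioi (0 : ℝ)))) (hX : WeightCond N n m)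
    (u : Euc n → ℝ) (D : ∀ k : ℕ, (Fin k → Fin n) → Euc n → ℝ)
    (hu : HasWeakDerivs n m u D) (hmem : N.ρ (rearr volume (gradAbs n m D)) < ⊤)
    (P Q : MvPolynomial (Fin n) ℝ)
    (hP : P.totalDegree ≤ m - 1) (hQ : Q.totalDegree ≤ m - 1)
    (hPfin : XmNorm N n m (fun x => u x - polyEval P x) < ⊤)
    (hQfin : XmNorm N n m (fun x => u x - polyEval Q x) < ⊤) :
    (∃ c : ℝ, P - Q = MvPolynomial.C c) ∧
      (Tendsto (fun t : ℝ =>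
          XmNorm N n m (Set.indicator {x : Euc n | ‖x‖ < t} fun _ => (1 : ℝ)))
        atTop (nhds ⊤) → P = Q) := by
  classical
  obtain ⟨n', rfl⟩ : ∃ n', n = n' + 1 := ⟨n - 1, by omega⟩
  have humeas : AEMeasurable u (volume : Measure (Euc (n' + 1))) :=
    hu.1.aestronglyMeasurable.aemeasurable
  have hPc : Continuous (polyEval P) := polyEval_continuous P
  have hQc : Continuous (polyEval Q) := polyEval_continuous Q
  set g : Euc (n' + 1) → ℝ := fun x => polyEval P x - polyEval Q x with hg
  have hgeval : ∀ x, g x = polyEval (P - Q) x := by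
    intro x
    rw [hg]
    show polyEval P x - polyEval Q x = polyEval (P - Q) x
    rw [polyEval, polyEval, polyEval, map_sub]
  have habs : ∀ x, |g x| ≤ |u x - polyEval P x| + |u x - polyEval Q x| := by
    intro x
    have h := abs_add_le (u x - polyEval Q x) (-(u x - polyEval P x))
    rw [abs_neg] at h
    have e : (u x - polyEval Q x) + (-(u x - polyEval P x)) = g x := by rw [hg]; ring
    rw [e] at h
    linarith
  have hgfin : XmNorm N (n' + 1) m g < ⊤ := by
    have h1 : AEMeasurable (fun x => u x - polyEval P x) (volume : Measure (Euc (n' + 1))) :=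
      humeas.sub hPc.aemeasurable
    have h2 : AEMeasurable (fun x => u x - polyEval Q x) (volume : Measure (Euc (n' + 1))) :=
      humeas.sub hQc.aemeasurable
    refine lt_of_le_of_lt (XmNorm_le_decomp N _ m h1 h2 habs) ?_
    exact ENNReal.add_lt_top.2 ⟨ENNReal.mul_lt_top ofNat_lt_top hPfin,
      ENNReal.mul_lt_top ofNat_lt_top hQfin⟩
  have hconst : ∃ c : ℝ, P - Q = MvPolynomial.C c := by
    by_contra hne
    push_neg at hne
    have hpm : Measurable g := (hPc.sub hQc).measurable
    have htop : XmNorm N (n' + 1) m g = ⊤ := by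
      refine XmNorm_eq_top_of_slices N (Nat.succ_pos n') (le_of_lt hmn) hX g hpm ?_
      intro l
      have hseteq : {x : Euc (n' + 1) | l < |g x|} = {x | l < |polyEval (P - Q) x|} := by
        ext x
        rw [mem_setOf_eq, hgeval x, mem_setOf_eq]
      rw [hseteq]
      exact polyEval_measure_top (P - Q) hne l
    rw [htop] at hgfin
    exact absurd hgfin (lt_irrefl ⊤)
  refine ⟨hconst, fun hTend => ?_⟩
  obtain ⟨c, hc⟩ := hconst
  by_cases hc0 : c = 0
  · have h0 : P - Q = 0 := by rw [hc, hc0, map_zero]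
    exact sub_eq_zero.1 h0
  · exfalso
    have hgc : ∀ x, g x = c := by
      intro x
      rw [hgeval x, hc, polyEval, MvPolynomial.eval_C]
    have hlow : ∀ t : ℝ, ENNReal.ofReal |c| * XmNorm N (n' + 1) m
        (Set.indicator {x : Euc (n' + 1) | ‖x‖ < t} fun _ => (1 : ℝ)) ≤ XmNorm N (n' + 1) m g := by
      intro t
      rw [XmNorm, ENNReal.mul_iSup]
      refine iSup_le fun f => ?_
      rw [ENNReal.mul_iSup]
      refine iSup_le fun hf => ?_
      rw [← lintegral_const_mul' _ _ ofReal_ne_top]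
      refine le_trans (lintegral_mono fun x => ?_) (le_XmNorm N _ m g hf)
      rw [hgc x, ← mul_assoc]
      refine mul_le_mul_left ?_ _
      calc ENNReal.ofReal |c| *
            ENNReal.ofReal |Set.indicator {x : Euc (n' + 1) | ‖x‖ < t} (fun _ => (1:ℝ)) x|
          ≤ ENNReal.ofReal |c| * 1 := by
            refine mul_le_mul_right (ENNReal.ofReal_le_one.2 ?_) _
            by_cases hx : x ∈ {x : Euc (n' + 1) | ‖x‖ < t}
            · rw [indicator_of_mem hx]; norm_num
            · rw [indicator_of_notMem hx]; norm_num
        _ = ENNReal.ofReal |c| := mul_one _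
    have key : ∀ k : ℕ, ENNReal.ofReal |c| * k ≤ XmNorm N (n' + 1) m g := by
      intro k
      obtain ⟨t, ht⟩ := (hTend.eventually (lt_mem_nhds (natCast_lt_top k))).exists
      refine le_trans ?_ (hlow t)
      exact mul_le_mul_right ht.le _
    have hδ : ENNReal.ofReal |c| ≠ 0 := (ENNReal.ofReal_pos.2 (abs_pos.2 hc0)).ne'
    have : (⊤:ℝ≥0∞) ≤ XmNorm N (n' + 1) m g := by
      calc (⊤:ℝ≥0∞) = ENNReal.ofReal |c| * ⊤ := (ENNReal.mul_top hδ).symm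
        _ = ENNReal.ofReal |c| * ⨆ k : ℕ, (k:ℝ≥0∞) := by rw [ENNReal.iSup_natCast]
        _ = ⨆ k : ℕ, ENNReal.ofReal |c| * k := ENNReal.mul_iSup _ _
        _ ≤ XmNorm N (n' + 1) m g := iSup_le key
    rw [top_le_iff.1 this] at hgfin
    exact absurd hgfin (lt_irrefl ⊤)
end
end

section
/- Let m < n and let A be a Young function satisfying ∫₀ (s/A(s))^{m/(n−m)} ds < ∞. With H_m(t) = (∫₀^t (s/A(s))^{m/(n−m)} ds)^{(n−m)/n}, H^∞ = lim_{t→∞} H_m(t), and D_m(t) = (t·A(H_m^{-1}(t))/H_m^{-1}(t))^{n/(n−m)} for 0 ≤ t < H^∞ and D_m(t) = ∞ for t ≥ H^∞, the function A_m(t) = ∫₀^t D_m(s)/s ds is a Young function. -/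
open MeasureTheory ENNReal Set Filter

noncomputable section

/-- Luxemburg norm of a real-valued function w.r.t. a Young function A. -/
def luxNorm {α : Type*} [MeasurableSpace α] (A : ℝ → ℝ≥0∞) (μ : Measure α) (f : α → ℝ) : ℝ≥0∞ :=
  sInf {l : ℝ≥0∞ | ∃ lam : ℝ, 0 < lam ∧ l = ENNReal.ofReal lam ∧ ∫⁻ x, A (|f x| / lam) ∂μ ≤ 1}

/-- Predicate: A is a Young function (convex, left-continuous, vanishing at 0,
nondecreasing, neither identically 0 nor identically ∞ on (0,∞)). -/
def IsYoungFunction (A : ℝ → ℝ≥0∞) : Prop :=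
  A 0 = 0 ∧ (∀ ⦃s t : ℝ⦄, 0 ≤ s → s ≤ t → A s ≤ A t) ∧
    (∀ ⦃s t a b : ℝ⦄, 0 ≤ s → 0 ≤ t → 0 ≤ a → 0 ≤ b → a + b = 1 →
      A (a * s + b * t) ≤ ENNReal.ofReal a * A s + ENNReal.ofReal b * A t) ∧
    (∀ t : ℝ, 0 < t → A t = ⨆ s : Ioo (0 : ℝ) t, A (s : ℝ)) ∧
    (∃ t : ℝ, 0 < t ∧ A t ≠ 0) ∧ (∃ t : ℝ, 0 < t ∧ A t ≠ ⊤)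

/-- The ratio s/A(s) (with the conventions 1/A = ∞ where A = 0). -/
def youngRatio (A : ℝ → ℝ≥0∞) (s : ℝ) : ℝ≥0∞ := ENNReal.ofReal s / A s

/-- H_m(t) = ( ∫₀^t (s/A(s))^{m/(n-m)} ds )^{(n-m)/n}. -/
def Hm (A : ℝ → ℝ≥0∞) (n m : ℕ) (t : ℝ) : ℝ≥0∞ :=
  (∫⁻ s in Ioo (0 : ℝ) t, youngRatio A s ^ ((m : ℝ) / ((n : ℝ) - m))) ^ (((n : ℝ) - m) / n)

/-- H^∞ = lim_{t→∞} H_m(t) (= sup, H_m being nondecreasing). -/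
def Hinfty (A : ℝ → ℝ≥0∞) (n m : ℕ) : ℝ≥0∞ := ⨆ t : ℝ, Hm A n m t

/-- The condition ∫₀ (s/A(s))^{m/(n-m)} ds < ∞. -/
def intCondZero (A : ℝ → ℝ≥0∞) (n m : ℕ) : Prop :=
  ∃ t₀ : ℝ, 0 < t₀ ∧ (∫⁻ s in Ioo (0 : ℝ) t₀, youngRatio A s ^ ((m : ℝ) / ((n : ℝ) - m))) < ⊤

/-- The (generalized) inverse of H_m. -/
def HmInv (A : ℝ → ℝ≥0∞) (n m : ℕ) (y : ℝ≥0∞) : ℝ :=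
  sInf {t : ℝ | 0 ≤ t ∧ y ≤ Hm A n m t}

/-- D_m(t) = ( t·A(H_m^{-1}(t)) / H_m^{-1}(t) )^{n/(n-m)} for 0 ≤ t < H^∞, and ∞ beyond. -/
def Dm (A : ℝ → ℝ≥0∞) (n m : ℕ) (t : ℝ) : ℝ≥0∞ :=
  if ENNReal.ofReal t < Hinfty A n m then
    (ENNReal.ofReal t * A (HmInv A n m (ENNReal.ofReal t)) /
        ENNReal.ofReal (HmInv A n m (ENNReal.ofReal t))) ^ ((n : ℝ) / ((n : ℝ) - m))
  else ⊤

/-- A_m(t) = ∫₀^t D_m(s)/s ds. -/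
def Am (A : ℝ → ℝ≥0∞) (n m : ℕ) (t : ℝ) : ℝ≥0∞ :=
  ∫⁻ s in Ioo (0 : ℝ) t, Dm A n m s / ENNReal.ofReal s


section Stmt15Aux

variable {A : ℝ → ℝ≥0∞} {n m : ℕ}

private lemma stmt15_scale (hA : IsYoungFunction A) {r t : ℝ}
    (hr : 0 ≤ r) (hrt : r ≤ t) (ht : 0 < t) :
    A r ≤ ENNReal.ofReal (r / t) * A t := by
  obtain ⟨hA0, -, hAconv, -⟩ := hA
  have h := hAconv (s := t) (t := 0) (a := r / t) (b := 1 - r / t) ht.le le_rfl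
    (div_nonneg hr ht.le)
    (by have := div_le_one_of_le₀ hrt ht.le; linarith) (by ring)
  rw [hA0] at h
  simp only [mul_zero, add_zero] at h
  rwa [div_mul_cancel₀ _ ht.ne'] at h

private lemma stmt15_ratio_mono (hA : IsYoungFunction A) {r r' : ℝ}
    (hr : 0 ≤ r) (h : r ≤ r') : A r / ENNReal.ofReal r ≤ A r' / ENNReal.ofReal r' := by
  rcases eq_or_lt_of_le hr with h0 | h0
  · simp [← h0, hA.1]
  · have hr' : 0 < r' := lt_of_lt_of_le h0 h
    have h1 : A r ≤ ENNReal.ofReal (r / r') * A r' := stmt15_scale hA hr h hr'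
    have hx0 : ENNReal.ofReal r ≠ 0 := (ENNReal.ofReal_pos.mpr h0).ne'
    calc A r / ENNReal.ofReal r
        ≤ (ENNReal.ofReal r / ENNReal.ofReal r' * A r') / ENNReal.ofReal r := by
          rw [← ENNReal.ofReal_div_of_pos hr']
          exact ENNReal.div_le_div h1 le_rfl
      _ = A r' / ENNReal.ofReal r' := by
          have h2 : ENNReal.ofReal r / ENNReal.ofReal r' * A r'
              = A r' / ENNReal.ofReal r' * ENNReal.ofReal r := by
            simp only [div_eq_mul_inv]; ring
          rw [h2, mul_div_assoc, ENNReal.div_self hx0 ENNReal.ofReal_ne_top, mul_one]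

private lemma stmt15_sub_pos (hmn : m < n) : (0:ℝ) < (n:ℝ) - m := by
  have : (m:ℝ) < n := by exact_mod_cast hmn
  linarith

private lemma stmt15_beta_pos (hm : 0 < m) (hmn : m < n) : 0 < (m:ℝ) / ((n:ℝ) - m) :=
  div_pos (by exact_mod_cast hm) (stmt15_sub_pos hmn)

private lemma stmt15_q_pos (hm : 0 < m) (hmn : m < n) : 0 < ((n:ℝ) - m) / n :=
  div_pos (stmt15_sub_pos hmn) (by exact_mod_cast Nat.zero_lt_of_lt hmn)

private lemma stmt15_exp_eq (hmn : m < n) :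
    (n:ℝ) / ((n:ℝ) - m) = (m:ℝ) / ((n:ℝ) - m) + 1 := by
  have h := stmt15_sub_pos hmn
  field_simp
  ring

private lemma stmt15_hm_mono (hmn : m < n) : Monotone (Hm A n m) := by
  intro s t h
  exact ENNReal.rpow_le_rpow (lintegral_mono_set (Ioo_subset_Ioo le_rfl h))
    (le_of_lt (div_pos (stmt15_sub_pos hmn) (by exact_mod_cast Nat.zero_lt_of_lt hmn)))

private lemma stmt15_hm_nonpos (hm : 0 < m) (hmn : m < n) {t : ℝ} (ht : t ≤ 0) :
    Hm A n m t = 0 := by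
  rw [Hm, Ioo_eq_empty (by linarith : ¬ (0:ℝ) < t)]
  rw [Measure.restrict_empty, lintegral_zero_measure,
    ENNReal.zero_rpow_of_pos (stmt15_q_pos hm hmn)]

private lemma stmt15_hmInv_nonneg {y : ℝ≥0∞} : 0 ≤ HmInv A n m y :=
  Real.sInf_nonneg fun _ ht => ht.1

private lemma stmt15_hmInv_le {y : ℝ≥0∞} {t : ℝ} (ht : 0 ≤ t) (h : y ≤ Hm A n m t) :
    HmInv A n m y ≤ t :=
  csInf_le ⟨0, fun _ hu => hu.1⟩ ⟨ht, h⟩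

private lemma stmt15_exists_mem (hm : 0 < m) (hmn : m < n) {y : ℝ≥0∞}
    (h : y < Hinfty A n m) : ∃ t : ℝ, 0 < t ∧ y ≤ Hm A n m t := by
  rw [Hinfty, lt_iSup_iff] at h
  obtain ⟨t, ht⟩ := h
  refine ⟨t, ?_, ht.le⟩
  by_contra h'
  rw [stmt15_hm_nonpos hm hmn (le_of_not_gt h')] at ht
  exact (not_lt.mpr zero_le) ht

private lemma stmt15_hmInv_mono (hm : 0 < m) (hmn : m < n) {y y' : ℝ≥0∞}
    (h : y ≤ y') (h' : y' < Hinfty A n m) : HmInv A n m y ≤ HmInv A n m y' := by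
  obtain ⟨t, htpos, hty⟩ := stmt15_exists_mem hm hmn h'
  exact csInf_le_csInf ⟨0, fun _ hu => hu.1⟩ ⟨t, htpos.le, hty⟩
    (fun u hu => ⟨hu.1, h.trans hu.2⟩)

private lemma stmt15_le_hmInv (hm : 0 < m) (hmn : m < n) {y : ℝ≥0∞} {t₀ : ℝ}
    (h1 : Hm A n m t₀ < y) (h2 : y < Hinfty A n m) : t₀ ≤ HmInv A n m y := by
  obtain ⟨t, htpos, hty⟩ := stmt15_exists_mem hm hmn h2
  refine le_csInf ⟨t, htpos.le, hty⟩ (fun u hu => ?_)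
  by_contra h'
  exact absurd (hu.2.trans (stmt15_hm_mono hmn (le_of_not_ge h'))) (not_le.mpr h1)

/-- the integrand of `Am` -/
private def stmt15g (A : ℝ → ℝ≥0∞) (n m : ℕ) (x : ℝ) : ℝ≥0∞ :=
  Dm A n m x / ENNReal.ofReal x

private lemma stmt15_Am_eq (t : ℝ) :
    Am A n m t = ∫⁻ x in Ioo (0:ℝ) t, stmt15g A n m x := rfl

private lemma stmt15g_zero (hm : 0 < m) (hmn : m < n) {x : ℝ} (hx : x ≤ 0)
    (hpos : 0 < Hinfty A n m) : stmt15g A n m x = 0 := by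
  have hb : ENNReal.ofReal x < Hinfty A n m := by
    rw [ENNReal.ofReal_eq_zero.mpr hx]; exact hpos
  have hD : Dm A n m x = 0 := by
    rw [Dm, if_pos hb, ENNReal.ofReal_eq_zero.mpr hx, zero_mul, ENNReal.zero_div,
      ENNReal.zero_rpow_of_pos (div_pos (by exact_mod_cast Nat.zero_lt_of_lt hmn : (0:ℝ) < n) (stmt15_sub_pos hmn))]
  rw [stmt15g, hD, ENNReal.zero_div]

private lemma stmt15g_eq (hm : 0 < m) (hmn : m < n) {x : ℝ} (hx : 0 < x)
    (hb : ENNReal.ofReal x < Hinfty A n m) :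
    stmt15g A n m x = (ENNReal.ofReal x) ^ ((m:ℝ) / ((n:ℝ) - m)) *
      (A (HmInv A n m (ENNReal.ofReal x)) /
        ENNReal.ofReal (HmInv A n m (ENNReal.ofReal x))) ^ ((m:ℝ) / ((n:ℝ) - m) + 1) := by
  have hX0 : ENNReal.ofReal x ≠ 0 := (ENNReal.ofReal_pos.mpr hx).ne'
  have hβ := stmt15_beta_pos hm hmn
  rw [stmt15g, Dm, if_pos hb, stmt15_exp_eq hmn, mul_div_assoc,
    ENNReal.mul_rpow_of_nonneg _ _ (by linarith),
    ENNReal.rpow_add _ _ hX0 ENNReal.ofReal_ne_top, ENNReal.rpow_one,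
    mul_right_comm, mul_div_assoc, ENNReal.div_self hX0 ENNReal.ofReal_ne_top, mul_one]

private lemma stmt15g_top {x : ℝ} (hb : ¬ ENNReal.ofReal x < Hinfty A n m) :
    stmt15g A n m x = ⊤ := by
  rw [stmt15g, Dm, if_neg hb, ENNReal.top_div, if_neg ENNReal.ofReal_ne_top]

private lemma stmt15g_mono (hA : IsYoungFunction A) (hm : 0 < m) (hmn : m < n)
    (hpos : 0 < Hinfty A n m) : Monotone (stmt15g A n m) := by
  intro x y hxy
  rcases le_or_gt x 0 with hx0 | hx0
  · rw [stmt15g_zero hm hmn hx0 hpos]; exact zero_le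
  · have hy0 : 0 < y := lt_of_lt_of_le hx0 hxy
    by_cases hby : ENNReal.ofReal y < Hinfty A n m
    · have hbx : ENNReal.ofReal x < Hinfty A n m :=
        lt_of_le_of_lt (ENNReal.ofReal_le_ofReal hxy) hby
      rw [stmt15g_eq hm hmn hx0 hbx, stmt15g_eq hm hmn hy0 hby]
      have hβ := stmt15_beta_pos hm hmn
      refine mul_le_mul' (ENNReal.rpow_le_rpow (ENNReal.ofReal_le_ofReal hxy) hβ.le) ?_
      refine ENNReal.rpow_le_rpow ?_ (by linarith)
      exact stmt15_ratio_mono hA stmt15_hmInv_nonneg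
        (stmt15_hmInv_mono hm hmn (ENNReal.ofReal_le_ofReal hxy) hby)
    · rw [stmt15g_top hby]; exact le_top

private lemma stmt15g_meas (hA : IsYoungFunction A) (hm : 0 < m) (hmn : m < n)
    (hpos : 0 < Hinfty A n m) : Measurable (stmt15g A n m) :=
  (stmt15g_mono hA hm hmn hpos).measurable

end Stmt15Aux

/-- Let m < n and A a Young function with ∫₀ (s/A(s))^{m/(n−m)} ds < ∞.
Then A_m(t) = ∫₀^t D_m(s)/s ds is a Young function. -/
theorem stmt_15 (n m : ℕ) (hn : 2 ≤ n) (hm : 0 < m) (hmn : m < n)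
    (A : ℝ → ℝ≥0∞) (hA : IsYoungFunction A) (h0 : intCondZero A n m) :
    IsYoungFunction (Am A n m) := by
  have hβ : 0 < (m:ℝ)/((n:ℝ)-m) := stmt15_beta_pos hm hmn
  have hnm := stmt15_sub_pos hmn
  obtain ⟨hA0, hAmono, hAconv, hAlc, hEx0, hExTop⟩ := id hA
  obtain ⟨tb, htb, htbNe⟩ := hExTop
  obtain ⟨t₀', ht₀', hI'⟩ := h0
  set t₀ := min t₀' tb with ht₀def
  have ht₀ : 0 < t₀ := lt_min ht₀' htb
  have hAt₀top : A t₀ ≠ ⊤ := fun h => htbNe (eq_top_iff.mpr (h ▸ hAmono ht₀.le (min_le_right _ _)))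
  have hI : (∫⁻ s in Ioo (0:ℝ) t₀, youngRatio A s ^ ((m:ℝ)/((n:ℝ)-m))) < ⊤ :=
    lt_of_le_of_lt (lintegral_mono_set (Ioo_subset_Ioo le_rfl (min_le_left _ _))) hI'
  have hAt₀0 : A t₀ ≠ 0 := by
    intro hz
    have hptwise : ∀ x ∈ Ioo (t₀/2) t₀, (⊤:ℝ≥0∞) ≤ youngRatio A x ^ ((m:ℝ)/((n:ℝ)-m)) := by
      intro x hx
      have hx1 := hx.1
      have hx2 := hx.2
      have hAx : A x = 0 := le_antisymm
        (hz ▸ hAmono (by linarith : (0:ℝ) ≤ x) hx2.le) zero_le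
      rw [youngRatio, hAx, ENNReal.div_zero ((ENNReal.ofReal_pos.mpr (by linarith)).ne'),
        ENNReal.top_rpow_of_pos hβ]
    have htple : (⊤:ℝ≥0∞) ≤ ∫⁻ s in Ioo (0:ℝ) t₀, youngRatio A s ^ ((m:ℝ)/((n:ℝ)-m)) := by
      calc (⊤:ℝ≥0∞) = ⊤ * volume (Ioo (t₀/2) t₀) := by
            rw [Real.volume_Ioo, ENNReal.top_mul ((ENNReal.ofReal_pos.mpr (by linarith)).ne')]
        _ = ∫⁻ _ in Ioo (t₀/2) t₀, (⊤:ℝ≥0∞) := (setLIntegral_const _ _).symm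
        _ ≤ ∫⁻ s in Ioo (t₀/2) t₀, youngRatio A s ^ ((m:ℝ)/((n:ℝ)-m)) :=
            setLIntegral_mono' measurableSet_Ioo hptwise
        _ ≤ _ := lintegral_mono_set (Ioo_subset_Ioo (by linarith) le_rfl)
    exact absurd (top_le_iff.mp htple) hI.ne
  have ht₀4 : (0:ℝ) < t₀/4 := by linarith
  have hHm2pos : 0 < Hm A n m (t₀/2) := by
    have hptwise : ∀ x ∈ Ioo (t₀/4) (t₀/2),
        (ENNReal.ofReal (t₀/4) / A t₀) ^ ((m:ℝ)/((n:ℝ)-m)) ≤ youngRatio A x ^ ((m:ℝ)/((n:ℝ)-m)) := by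
      intro x hx
      exact ENNReal.rpow_le_rpow (ENNReal.div_le_div (ENNReal.ofReal_le_ofReal hx.1.le)
        (hAmono (by linarith [hx.1]) (by linarith [hx.2]))) hβ.le
    have hint : (ENNReal.ofReal (t₀/4) / A t₀) ^ ((m:ℝ)/((n:ℝ)-m)) * ENNReal.ofReal (t₀/2 - t₀/4)
        ≤ ∫⁻ s in Ioo (0:ℝ) (t₀/2), youngRatio A s ^ ((m:ℝ)/((n:ℝ)-m)) := by
      calc (ENNReal.ofReal (t₀/4) / A t₀) ^ ((m:ℝ)/((n:ℝ)-m)) * ENNReal.ofReal (t₀/2 - t₀/4)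
          = ∫⁻ _ in Ioo (t₀/4) (t₀/2), (ENNReal.ofReal (t₀/4) / A t₀) ^ ((m:ℝ)/((n:ℝ)-m)) := by
            rw [setLIntegral_const, Real.volume_Ioo]
        _ ≤ ∫⁻ s in Ioo (t₀/4) (t₀/2), youngRatio A s ^ ((m:ℝ)/((n:ℝ)-m)) :=
            setLIntegral_mono' measurableSet_Ioo hptwise
        _ ≤ _ := lintegral_mono_set (Ioo_subset_Ioo (by linarith) le_rfl)
    have hcne : (ENNReal.ofReal (t₀/4) / A t₀) ^ ((m:ℝ)/((n:ℝ)-m)) ≠ 0 := by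
      rw [Ne, ENNReal.rpow_eq_zero_iff]
      rintro (⟨h1, -⟩ | ⟨-, h2⟩)
      · rw [ENNReal.div_eq_zero_iff] at h1
        rcases h1 with h1 | h1
        · exact (ENNReal.ofReal_pos.mpr ht₀4).ne' h1
        · exact hAt₀top h1
      · linarith
    rw [Hm, pos_iff_ne_zero, Ne, ENNReal.rpow_eq_zero_iff]
    rintro (⟨h1, -⟩ | ⟨-, h2⟩)
    · rw [h1] at hint
      have : (ENNReal.ofReal (t₀/4) / A t₀) ^ ((m:ℝ)/((n:ℝ)-m)) * ENNReal.ofReal (t₀/2 - t₀/4) = 0 :=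
        le_antisymm hint zero_le
      rcases mul_eq_zero.mp this with h | h
      · exact hcne h
      · exact (ENNReal.ofReal_pos.mpr (by linarith)).ne' h
    · linarith [stmt15_q_pos hm hmn]
  have hHmt₀top : Hm A n m t₀ ≠ ⊤ := by
    rw [Hm]
    exact (ENNReal.rpow_lt_top_of_nonneg (stmt15_q_pos hm hmn).le hI.ne).ne
  have hle_inf : Hm A n m (t₀/2) ≤ Hinfty A n m := le_iSup (fun t => Hm A n m t) (t₀/2)
  have hle_inf' : Hm A n m t₀ ≤ Hinfty A n m := le_iSup (fun t => Hm A n m t) t₀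
  have hHinfty_pos : 0 < Hinfty A n m := lt_of_lt_of_le hHm2pos hle_inf
  have hg_mono : Monotone (stmt15g A n m) := stmt15g_mono hA hm hmn hHinfty_pos
  refine ⟨?_, ?_, ?_, ?_, ?_, ?_⟩
  · -- Am 0 = 0
    rw [stmt15_Am_eq, Ioo_self, Measure.restrict_empty, lintegral_zero_measure]
  · -- monotone
    intro s t _ hst
    rw [stmt15_Am_eq, stmt15_Am_eq]
    exact lintegral_mono_set (Ioo_subset_Ioo le_rfl hst)
  · -- convex
    have key : ∀ s t a b : ℝ, 0 ≤ s → s ≤ t → 0 ≤ a → 0 ≤ b → a + b = 1 →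
        Am A n m (a*s + b*t) ≤ ENNReal.ofReal a * Am A n m s + ENNReal.ofReal b * Am A n m t := by
      intro s t a b hs hst ha hb hab
      set u := a*s + b*t with hu
      have hdsu : u - s = b*(t-s) := by rw [hu]; linear_combination s*hab
      have hdut : t - u = a*(t-s) := by rw [hu]; linear_combination (-t)*hab
      have hsu : s ≤ u := by nlinarith [mul_nonneg hb (sub_nonneg.mpr hst)]
      have hut : u ≤ t := by nlinarith [mul_nonneg ha (sub_nonneg.mpr hst)]
      have hu0 : 0 ≤ u := hs.trans hsu
      set IX := ∫⁻ x in Ioo (0:ℝ) s, stmt15g A n m x with hIX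
      set IY := ∫⁻ x in Ioo (0:ℝ) u \ Ioo (0:ℝ) s, stmt15g A n m x with hIY
      set IZ := ∫⁻ x in Ioo (0:ℝ) t \ Ioo (0:ℝ) u, stmt15g A n m x with hIZ
      have hYmeas : MeasurableSet (Ioo (0:ℝ) u \ Ioo (0:ℝ) s) :=
        measurableSet_Ioo.diff measurableSet_Ioo
      have hZmeas : MeasurableSet (Ioo (0:ℝ) t \ Ioo (0:ℝ) u) :=
        measurableSet_Ioo.diff measurableSet_Ioo
      have hAms : Am A n m s = IX := stmt15_Am_eq s
      have hAmu : Am A n m u = IX + IY := by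
        rw [stmt15_Am_eq u,
          show Ioo (0:ℝ) u = Ioo (0:ℝ) s ∪ (Ioo (0:ℝ) u \ Ioo (0:ℝ) s) from
            (union_diff_cancel (Ioo_subset_Ioo le_rfl hsu)).symm,
          lintegral_union hYmeas disjoint_sdiff_self_right, ← hIX, ← hIY]
      have hAmt : Am A n m t = IX + IY + IZ := by
        rw [stmt15_Am_eq t,
          show Ioo (0:ℝ) t = Ioo (0:ℝ) u ∪ (Ioo (0:ℝ) t \ Ioo (0:ℝ) u) from
            (union_diff_cancel (Ioo_subset_Ioo le_rfl hut)).symm,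
          lintegral_union hZmeas disjoint_sdiff_self_right, ← hIZ, ← stmt15_Am_eq u, hAmu]
      have hY_le : IY ≤ stmt15g A n m u * ENNReal.ofReal (u - s) := by
        calc IY ≤ ∫⁻ _ in Ioo (0:ℝ) u \ Ioo (0:ℝ) s, stmt15g A n m u :=
              setLIntegral_mono' hYmeas (fun x hx => hg_mono hx.1.2.le)
          _ = stmt15g A n m u * volume (Ioo (0:ℝ) u \ Ioo (0:ℝ) s) := setLIntegral_const _ _
          _ ≤ stmt15g A n m u * ENNReal.ofReal (u - s) := by
              refine mul_le_mul_right ?_ _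
              have hsub : Ioo (0:ℝ) u \ Ioo (0:ℝ) s ⊆ Ico s u := by
                intro x hx
                simp only [mem_diff, mem_Ioo, mem_Ico, not_and, not_lt] at hx ⊢
                exact ⟨le_of_not_gt (fun hxs => absurd (hx.2 hx.1.1) (not_le.mpr hxs)), hx.1.2⟩
              calc volume (Ioo (0:ℝ) u \ Ioo (0:ℝ) s) ≤ volume (Ico s u) := measure_mono hsub
                _ = ENNReal.ofReal (u - s) := Real.volume_Ico
      have hZ_ge : stmt15g A n m u * ENNReal.ofReal (t - u) ≤ IZ := by
        calc stmt15g A n m u * ENNReal.ofReal (t - u)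
            = stmt15g A n m u * volume (Ioo u t) := by rw [Real.volume_Ioo]
          _ = ∫⁻ _ in Ioo u t, stmt15g A n m u := (setLIntegral_const _ _).symm
          _ ≤ ∫⁻ x in Ioo u t, stmt15g A n m x :=
              setLIntegral_mono' measurableSet_Ioo (fun x hx => hg_mono hx.1.le)
          _ ≤ IZ := by
              refine lintegral_mono_set ?_
              intro x hx
              simp only [mem_diff, mem_Ioo, not_and, not_lt] at hx ⊢
              exact ⟨⟨lt_of_le_of_lt hu0 hx.1, hx.2⟩, fun _ => hx.1.le⟩
      have hcentral : ENNReal.ofReal a * IY ≤ ENNReal.ofReal b * IZ := by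
        calc ENNReal.ofReal a * IY
            ≤ ENNReal.ofReal a * (stmt15g A n m u * ENNReal.ofReal (u-s)) :=
              mul_le_mul_right hY_le _
          _ = stmt15g A n m u * (ENNReal.ofReal a * ENNReal.ofReal (u-s)) := by ring
          _ = stmt15g A n m u * ENNReal.ofReal (a*(u-s)) := by
              rw [ENNReal.ofReal_mul ha]
          _ = stmt15g A n m u * ENNReal.ofReal (b*(t-u)) := by
              rw [show a*(u-s) = b*(t-u) from by rw [hdsu, hdut]; ring]
          _ = ENNReal.ofReal b * (stmt15g A n m u * ENNReal.ofReal (t-u)) := by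
              rw [ENNReal.ofReal_mul hb]; ring
          _ ≤ ENNReal.ofReal b * IZ := mul_le_mul_right hZ_ge _
      have hsplit : ∀ w : ℝ≥0∞, w = ENNReal.ofReal a * w + ENNReal.ofReal b * w := fun w => by
        rw [← add_mul, ← ENNReal.ofReal_add ha hb, hab, ENNReal.ofReal_one, one_mul]
      calc Am A n m u = IX + IY := hAmu
        _ = (ENNReal.ofReal a * IX + ENNReal.ofReal b * IX)
            + (ENNReal.ofReal a * IY + ENNReal.ofReal b * IY) := by
              rw [← hsplit, ← hsplit]
        _ ≤ (ENNReal.ofReal a * IX + ENNReal.ofReal b * IX)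
            + (ENNReal.ofReal b * IZ + ENNReal.ofReal b * IY) :=
              add_le_add_right (add_le_add hcentral le_rfl) _
        _ = ENNReal.ofReal a * IX + ENNReal.ofReal b * (IX + IY + IZ) := by ring
        _ = ENNReal.ofReal a * Am A n m s + ENNReal.ofReal b * Am A n m t := by
              rw [hAms, hAmt]
    intro s t a b hs ht ha hb hab
    rcases le_total s t with h | h
    · exact key s t a b hs h ha hb hab
    · have hk := key t s b a ht h hb ha (by linarith)
      calc Am A n m (a*s + b*t) = Am A n m (b*t + a*s) := by rw [add_comm (a*s)]
        _ ≤ ENNReal.ofReal b * Am A n m t + ENNReal.ofReal a * Am A n m s := hk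
        _ = ENNReal.ofReal a * Am A n m s + ENNReal.ofReal b * Am A n m t := add_comm _ _
  · -- left continuity
    intro t ht
    refine le_antisymm ?_ (iSup_le fun s => by
      rw [stmt15_Am_eq, stmt15_Am_eq]
      exact lintegral_mono_set (Ioo_subset_Ioo le_rfl s.2.2.le))
    set sk : ℕ → ℝ := fun k => t - t/(k+2) with hsk
    have hcast : ∀ k : ℕ, (0:ℝ) < (k:ℝ)+2 := fun k => by
      have := Nat.cast_nonneg (α := ℝ) k; linarith
    have hsk_pos : ∀ k, 0 < sk k := by
      intro k
      have h2 : (1:ℝ) < (k:ℝ)+2 := by have := Nat.cast_nonneg (α := ℝ) k; linarith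
      have := div_lt_self ht h2
      simp only [hsk]; linarith
    have hsk_lt : ∀ k, sk k < t := by
      intro k
      have : 0 < t/((k:ℝ)+2) := div_pos ht (hcast k)
      simp only [hsk]; linarith
    have hsk_mono : Monotone sk := by
      intro k k' hk
      have hkk : (k:ℝ) + 2 ≤ (k':ℝ) + 2 := by
        have : (k:ℝ) ≤ k' := by exact_mod_cast hk
        linarith
      have : t/((k':ℝ)+2) ≤ t/((k:ℝ)+2) :=
        div_le_div_of_nonneg_left ht.le (hcast k) hkk
      simp only [hsk]; linarith
    have hUnion : ⋃ k : ℕ, Ioo (0:ℝ) (sk k) = Ioo (0:ℝ) t := by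
      ext x
      simp only [mem_iUnion, mem_Ioo]
      constructor
      · rintro ⟨k, hx1, hx2⟩; exact ⟨hx1, hx2.trans (hsk_lt k)⟩
      · rintro ⟨hx1, hx2⟩
        obtain ⟨k, hk⟩ := exists_nat_gt (t/(t-x))
        refine ⟨k, hx1, ?_⟩
        have htx : 0 < t - x := by linarith
        have hk2 : t/(t-x) < (k:ℝ)+2 := by linarith
        have h3 : t/((k:ℝ)+2) < t - x := by
          rw [div_lt_iff₀ (hcast k)]
          have := (div_lt_iff₀ htx).mp hk2
          nlinarith
        simp only [hsk]; linarith
    have hνAm : ∀ r : ℝ, Am A n m r = volume.withDensity (stmt15g A n m) (Ioo (0:ℝ) r) := by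
      intro r
      rw [stmt15_Am_eq, ← withDensity_apply _ measurableSet_Ioo]
    have hdir : Directed (fun x1 x2 : Set ℝ => x1 ⊆ x2) (fun k => Ioo (0:ℝ) (sk k)) := by
      have hmonoS : Monotone (fun k => Ioo (0:ℝ) (sk k)) := fun k k' hk =>
        Ioo_subset_Ioo le_rfl (hsk_mono hk)
      exact hmonoS.directed_le
    calc Am A n m t = volume.withDensity (stmt15g A n m) (Ioo (0:ℝ) t) := hνAm t
      _ = volume.withDensity (stmt15g A n m) (⋃ k, Ioo (0:ℝ) (sk k)) := by rw [hUnion]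
      _ = ⨆ k, volume.withDensity (stmt15g A n m) (Ioo (0:ℝ) (sk k)) :=
          Directed.measure_iUnion hdir
      _ ≤ ⨆ s : Ioo (0:ℝ) t, Am A n m s := by
          refine iSup_le fun k => ?_
          rw [← hνAm (sk k)]
          exact le_iSup_of_le (⟨sk k, mem_Ioo.mpr ⟨hsk_pos k, hsk_lt k⟩⟩ : Ioo (0:ℝ) t) le_rfl
  · -- not identically zero
    set s₁ := max ((Hm A n m t₀).toReal + 1) 1 with hs₁def
    have hs₁ : (0:ℝ) < s₁ := lt_of_lt_of_le one_pos (le_max_right _ _)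
    have hgt : Hm A n m t₀ < ENNReal.ofReal s₁ := by
      calc Hm A n m t₀ < Hm A n m t₀ + 1 := ENNReal.lt_add_right hHmt₀top one_ne_zero
        _ = ENNReal.ofReal ((Hm A n m t₀).toReal + 1) := by
            rw [ENNReal.ofReal_add ENNReal.toReal_nonneg zero_le_one,
              ENNReal.ofReal_toReal hHmt₀top, ENNReal.ofReal_one]
        _ ≤ ENNReal.ofReal s₁ := ENNReal.ofReal_le_ofReal (le_max_left _ _)
    have hgne : stmt15g A n m s₁ ≠ 0 := by
      by_cases hb : ENNReal.ofReal s₁ < Hinfty A n m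
      · rw [stmt15g_eq hm hmn hs₁ hb]
        have hr_ge : t₀ ≤ HmInv A n m (ENNReal.ofReal s₁) := stmt15_le_hmInv hm hmn hgt hb
        have hAr : A (HmInv A n m (ENNReal.ofReal s₁)) ≠ 0 := fun h =>
          hAt₀0 (le_antisymm (h ▸ hAmono ht₀.le hr_ge) zero_le)
        refine mul_ne_zero ?_ ?_
        · rw [Ne, ENNReal.rpow_eq_zero_iff]
          rintro (⟨h1, -⟩ | ⟨h1, -⟩)
          · exact (ENNReal.ofReal_pos.mpr hs₁).ne' h1
          · exact ENNReal.ofReal_ne_top h1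
        · rw [Ne, ENNReal.rpow_eq_zero_iff]
          rintro (⟨h1, -⟩ | ⟨-, h2⟩)
          · rw [ENNReal.div_eq_zero_iff] at h1
            rcases h1 with h1 | h1
            · exact hAr h1
            · exact ENNReal.ofReal_ne_top h1
          · linarith
      · rw [stmt15g_top hb]; exact ENNReal.top_ne_zero
    refine ⟨s₁ + 1, by linarith, fun h0' => hgne ?_⟩
    have hge : stmt15g A n m s₁ * ENNReal.ofReal 1 ≤ Am A n m (s₁+1) := by
      calc stmt15g A n m s₁ * ENNReal.ofReal 1
          = stmt15g A n m s₁ * volume (Ioo s₁ (s₁+1)) := by rw [Real.volume_Ioo]; norm_num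
        _ = ∫⁻ _ in Ioo s₁ (s₁+1), stmt15g A n m s₁ := (setLIntegral_const _ _).symm
        _ ≤ ∫⁻ x in Ioo s₁ (s₁+1), stmt15g A n m x :=
            setLIntegral_mono' measurableSet_Ioo (fun x hx => hg_mono hx.1.le)
        _ ≤ Am A n m (s₁+1) := by
            rw [stmt15_Am_eq]
            exact lintegral_mono_set (fun x hx => ⟨lt_trans hs₁ hx.1, hx.2⟩)
    rw [h0'] at hge
    simpa [ENNReal.ofReal_one] using le_antisymm hge zero_le
  · -- not identically top
    have hh0 : Hm A n m (t₀/2) ≠ 0 := hHm2pos.ne'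
    have hhtop : Hm A n m (t₀/2) ≠ ⊤ :=
      ne_top_of_le_ne_top hHmt₀top (stmt15_hm_mono hmn (by linarith))
    set s₂ := min ((Hm A n m (t₀/2)).toReal/2) 1 with hs₂def
    have hs₂pos : 0 < s₂ := lt_min (half_pos (ENNReal.toReal_pos hh0 hhtop)) one_pos
    have hs₂le : ENNReal.ofReal s₂ ≤ Hm A n m (t₀/2) := by
      calc ENNReal.ofReal s₂ ≤ ENNReal.ofReal ((Hm A n m (t₀/2)).toReal/2) :=
            ENNReal.ofReal_le_ofReal (min_le_left _ _)
        _ ≤ ENNReal.ofReal ((Hm A n m (t₀/2)).toReal) :=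
            ENNReal.ofReal_le_ofReal (by linarith [ENNReal.toReal_nonneg (a := Hm A n m (t₀/2))])
        _ = Hm A n m (t₀/2) := ENNReal.ofReal_toReal hhtop
    set C := (Hm A n m t₀) ^ ((m:ℝ)/((n:ℝ)-m)) *
      (A t₀ / ENNReal.ofReal t₀) ^ ((m:ℝ)/((n:ℝ)-m) + 1) with hC
    have hCtop : C ≠ ⊤ := by
      refine (ENNReal.mul_lt_top ?_ ?_).ne
      · exact ENNReal.rpow_lt_top_of_nonneg hβ.le hHmt₀top
      · exact ENNReal.rpow_lt_top_of_nonneg (by linarith)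
          (ENNReal.div_lt_top hAt₀top (ENNReal.ofReal_pos.mpr ht₀).ne').ne
    have hbound : ∀ x ∈ Ioo (0:ℝ) s₂, stmt15g A n m x ≤ C := by
      intro x hx
      have hxs : ENNReal.ofReal x ≤ Hm A n m (t₀/2) :=
        le_trans (ENNReal.ofReal_le_ofReal hx.2.le) hs₂le
      have hxlt : ENNReal.ofReal x < Hinfty A n m :=
        lt_of_lt_of_le (lt_of_lt_of_le ((ENNReal.ofReal_lt_ofReal_iff hs₂pos).mpr hx.2) hs₂le)
          hle_inf
      rw [stmt15g_eq hm hmn hx.1 hxlt]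
      have hrle : HmInv A n m (ENNReal.ofReal x) ≤ t₀ :=
        le_trans (stmt15_hmInv_le (by linarith : (0:ℝ) ≤ t₀/2) hxs) (by linarith)
      refine mul_le_mul' ?_ ?_
      · exact ENNReal.rpow_le_rpow (hxs.trans (stmt15_hm_mono hmn (by linarith))) hβ.le
      · exact ENNReal.rpow_le_rpow (stmt15_ratio_mono hA stmt15_hmInv_nonneg hrle)
          (by linarith)
    refine ⟨s₂, hs₂pos, ?_⟩
    have hAmle : Am A n m s₂ ≤ C * ENNReal.ofReal s₂ := by
      rw [stmt15_Am_eq]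
      calc ∫⁻ x in Ioo (0:ℝ) s₂, stmt15g A n m x ≤ ∫⁻ _ in Ioo (0:ℝ) s₂, C :=
            setLIntegral_mono' measurableSet_Ioo hbound
        _ = C * ENNReal.ofReal s₂ := by rw [setLIntegral_const, Real.volume_Ioo, sub_zero]
    exact ne_top_of_le_ne_top (ENNReal.mul_lt_top hCtop.lt_top ENNReal.ofReal_lt_top).ne hAmle
end
end

section
/- Let n ≥ 2, m < n, and let A be a Young function with ∫₀ (s/A(s))^{m/(n−m)} ds < ∞ and ∫^∞ (s/A(s))^{m/(n−m)} ds = ∞. Then the function t ↦ t^{m/n − 1} χ_{(1,∞)}(t) belongs to the associate space (L^A)'(0,∞); equivalently, ∫₁^∞ t^{m/n−1} g(t) dt ≤ C for every nonnegative nonincreasing g with ‖g‖_{L^A(0,∞)} ≤ 1. -/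
open MeasureTheory ENNReal Set Filter

noncomputable section

lemma aux_lint_rpow (c α T : ℝ) (hc : 0 ≤ c) (hα0 : 0 < α) (hα1 : α < 1) (hT : 0 < T) :
    (∫⁻ t in Ioo (0:ℝ) T, ENNReal.ofReal (c * t ^ (-α))) ≤
      ENNReal.ofReal (c * (T ^ (1 - α) / (1 - α))) := by
  have hr : (-1:ℝ) < -α := by linarith
  have hint : IntervalIntegrable (fun x : ℝ => x ^ (-α)) volume 0 T :=
    intervalIntegral.intervalIntegrable_rpow' hr
  have hIntOn : IntegrableOn (fun x : ℝ => c * x ^ (-α)) (Ioo 0 T) volume :=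
    ((hint.1.mono_set Ioo_subset_Ioc_self).const_mul c)
  have hnn : 0 ≤ᵐ[volume.restrict (Ioo (0:ℝ) T)] fun x : ℝ => c * x ^ (-α) := by
    filter_upwards [ae_restrict_of_forall_mem measurableSet_Ioo
      (fun x (hx : x ∈ Ioo (0:ℝ) T) => hx.1)] with x hx
    exact mul_nonneg hc (Real.rpow_nonneg hx.le _)
  rw [← ofReal_integral_eq_lintegral_ofReal hIntOn hnn]
  apply ENNReal.ofReal_le_ofReal
  rw [integral_const_mul]
  apply mul_le_mul_of_nonneg_left ?_ hc
  have hval : ∫ x in Ioo (0:ℝ) T, x ^ (-α) = T ^ (1 - α) / (1 - α) := by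
    rw [← integral_Ioc_eq_integral_Ioo, ← intervalIntegral.integral_of_le hT.le,
      integral_rpow (Or.inl hr), Real.zero_rpow (by linarith : -α + 1 ≠ 0),
      show -α + 1 = 1 - α by ring]
    ring
  rw [hval]


/-- Let n ≥ 2, m < n, and A a Young function with
∫₀ (s/A(s))^{m/(n−m)} ds < ∞ and ∫^∞ (s/A(s))^{m/(n−m)} ds = ∞. Then
t^{m/n−1}χ_{(1,∞)}(t) belongs to the associate space (L^A)'(0,∞): there is C < ∞ with
∫₁^∞ t^{m/n−1} f(t) dt ≤ C for every nonnegative f with ‖f‖_{L^A(0,∞)} ≤ 1. -/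
theorem stmt_18 (n m : ℕ) (hn : 2 ≤ n) (hm : 0 < m) (hmn : m < n)
    (A : ℝ → ℝ≥0∞) (hA : IsYoungFunction A) (h0 : intCondZero A n m)
    (hInf : ∀ t₀ : ℝ, 0 < t₀ →
      (∫⁻ s in Ioi t₀, youngRatio A s ^ ((m : ℝ) / ((n : ℝ) - m))) = ⊤) :
    ∃ C : ℝ≥0∞, C ≠ ⊤ ∧
      ∀ f : ℝ → ℝ, (∀ t, 0 ≤ f t) →
        luxNorm A (volume.restrict (Ioi (0 : ℝ))) f ≤ 1 →
        (∫⁻ t in Ioi (1 : ℝ), ENNReal.ofReal (t ^ ((m : ℝ) / n - 1) * f t)) ≤ C := by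
  obtain ⟨hA0, hmono, hconv, -, -, -⟩ := hA
  obtain ⟨t₀, ht₀, hI₀⟩ := h0
  set p : ℝ := (m : ℝ) / ((n : ℝ) - m) with hp_def
  set α : ℝ := ((n : ℝ) - m) / n with hα_def
  have hn0 : (0:ℝ) < n := by positivity
  have hm0 : (0:ℝ) < m := by exact_mod_cast hm
  have hnm : (0:ℝ) < (n:ℝ) - m := by
    have : (m:ℝ) < n := by exact_mod_cast hmn
    linarith
  have hn0' : (n:ℝ) ≠ 0 := hn0.ne'
  have hnm0 : (n:ℝ) - m ≠ 0 := hnm.ne'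
  have hα0 : 0 < α := by rw [hα_def]; positivity
  have hα1 : α < 1 := by
    rw [hα_def, div_lt_one hn0]; linarith
  have hp0 : 0 < p := by rw [hp_def]; positivity
  have h1α : 0 < 1 - α := by linarith
  have hexp : (m:ℝ)/n - 1 = -α := by rw [hα_def]; field_simp; ring
  have hep : -(1/α) * (1 - α) = -p := by
    rw [hα_def, hp_def]; field_simp; ring
  -- scaling lemma from convexity
  have hscale : ∀ k s : ℝ, 0 ≤ k → k ≤ 1 → 0 ≤ s → A (k * s) ≤ ENNReal.ofReal k * A s := by
    intro k s hk hk1 hs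
    have h := hconv hs (le_refl (0:ℝ)) hk (by linarith : (0:ℝ) ≤ 1 - k) (by ring)
    simpa [hA0] using h
  -- positivity of A
  have hApos : ∀ s : ℝ, 0 < s → A s ≠ 0 := by
    intro s hs hAs
    set ε := min s t₀ with hε_def
    have hε : 0 < ε := lt_min hs ht₀
    have hzero : ∀ x ∈ Ioo (0:ℝ) ε, youngRatio A x ^ p = ⊤ := by
      intro x hx
      have hAx : A x = 0 := le_antisymm (by
        calc A x ≤ A s := hmono hx.1.le (le_trans hx.2.le (min_le_left _ _))
        _ = 0 := hAs) zero_le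
      rw [youngRatio, hAx, ENNReal.div_zero (ENNReal.ofReal_pos.mpr hx.1).ne']
      exact ENNReal.top_rpow_of_pos hp0
    have htop : (⊤ : ℝ≥0∞) ≤ ∫⁻ x in Ioo (0:ℝ) t₀, youngRatio A x ^ p := by
      have h1 : (∫⁻ x in Ioo (0:ℝ) ε, youngRatio A x ^ p) = ⊤ := by
        rw [setLIntegral_congr_fun measurableSet_Ioo hzero, setLIntegral_const]
        rw [ENNReal.top_mul]
        simp [Real.volume_Ioo, hε]
      calc (⊤:ℝ≥0∞) = ∫⁻ x in Ioo (0:ℝ) ε, youngRatio A x ^ p := h1.symm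
        _ ≤ _ := lintegral_mono' (Measure.restrict_mono
            (Ioo_subset_Ioo le_rfl (min_le_right _ _)) le_rfl) le_rfl
    exact absurd (le_antisymm le_top htop) (by simpa using hI₀.ne)
  -- choose c
  have hAt₀pos : A t₀ ≠ 0 := hApos t₀ ht₀
  obtain ⟨c, hc0, hct₀⟩ : ∃ c : ℝ, 0 < c ∧ ENNReal.ofReal (2 * c * t₀) ≤ A t₀ := by
    set b := min (A t₀) 1 with hb_def
    have hbtop : b ≠ ⊤ := ne_top_of_le_ne_top one_ne_top (min_le_right _ _)
    have hb0 : b ≠ 0 := by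
      simp only [hb_def, ne_eq, min_eq_iff]
      intro h
      rcases h with ⟨h, -⟩ | ⟨h, -⟩
      · exact hAt₀pos h
      · exact one_ne_zero h
    have hbR : 0 < b.toReal := ENNReal.toReal_pos hb0 hbtop
    refine ⟨b.toReal / (2 * t₀), by positivity, ?_⟩
    rw [show 2 * (b.toReal / (2 * t₀)) * t₀ = b.toReal by field_simp,
      ENNReal.ofReal_toReal hbtop]
    exact min_le_left _ _
  -- large s lower bound for A
  have hbig : ∀ s : ℝ, t₀ < s → ENNReal.ofReal (2*c*s) ≤ A s := by
    intro s hs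
    have hs0 : (0:ℝ) < s := ht₀.trans hs
    have h1 : A t₀ ≤ ENNReal.ofReal (t₀/s) * A s := by
      have h := hscale (t₀/s) s (by positivity) ((div_le_one hs0).2 hs.le) hs0.le
      rwa [div_mul_cancel₀ _ hs0.ne'] at h
    calc ENNReal.ofReal (2*c*s) = ENNReal.ofReal (s/t₀) * ENNReal.ofReal (2*c*t₀) := by
          rw [← ENNReal.ofReal_mul (by positivity : (0:ℝ) ≤ s/t₀)]
          congr 1; field_simp
      _ ≤ ENNReal.ofReal (s/t₀) * (ENNReal.ofReal (t₀/s) * A s) :=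
          mul_le_mul_right (hct₀.trans h1) _
      _ = ENNReal.ofReal (s/t₀ * (t₀/s)) * A s := by
          rw [ENNReal.ofReal_mul (by positivity : (0:ℝ) ≤ s/t₀), mul_assoc]
      _ = A s := by
          rw [show s/t₀ * (t₀/s) = 1 by field_simp, ENNReal.ofReal_one, one_mul]
  -- the region S, functions F and G
  set S : Set (ℝ × ℝ) :=
    {q : ℝ × ℝ | A (max q.2 0) < ENNReal.ofReal (2*c*q.1 ^ (-α)*q.2)} with hS_def
  have hAmax : Measurable fun s : ℝ => A (max s 0) := by
    have hmono' : Monotone fun s : ℝ => A (max s 0) := fun x y hxy =>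
      hmono (le_max_right _ _) (max_le_max hxy le_rfl)
    exact hmono'.measurable
  have hSmeas : MeasurableSet S := by
    rw [hS_def]
    exact measurableSet_lt (hAmax.comp measurable_snd) (by fun_prop)
  set F : ℝ × ℝ → ℝ≥0∞ := S.indicator (fun q => ENNReal.ofReal (c * q.1 ^ (-α))) with hF_def
  have hFmeas : Measurable F := by
    rw [hF_def]
    exact Measurable.indicator (by fun_prop) hSmeas
  set G : ℝ → ℝ≥0∞ := fun t => ∫⁻ x in Ioi (0:ℝ), F (t, x) with hG_def
  have hGmeas : Measurable G := by
    rw [hG_def]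
    exact hFmeas.lintegral_prod_right'
  set K : ℝ≥0∞ := ENNReal.ofReal (c * (2*c)^p / (1-α)) with hK_def
  set I₀ : ℝ≥0∞ := ∫⁻ x in Ioo (0:ℝ) t₀, youngRatio A x ^ p with hI₀_def
  -- pointwise Young-type bound
  have hYoung : ∀ lam : ℝ, 0 < lam → ∀ f : ℝ → ℝ, (∀ t, 0 ≤ f t) → ∀ t : ℝ, 1 < t →
      ENNReal.ofReal (t ^ (-α) * f t) ≤ ENNReal.ofReal (lam / c) * (A (f t / lam) + G t) := by
    intro lam hlam f hf t ht
    have ht0 : (0:ℝ) < t := lt_trans one_pos ht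
    have htα : 0 < t ^ (-α) := Real.rpow_pos_of_pos ht0 _
    set s := f t / lam with hs_def
    have hs0 : 0 ≤ s := div_nonneg (hf t) hlam.le
    have hkey : ENNReal.ofReal (c * t ^ (-α) * s) ≤ A s + G t := by
      by_cases hmem : (t, s) ∈ S
      · have hspos : 0 < s := by
          rcases lt_or_eq_of_le hs0 with h | h
          · exact h
          · exfalso
            rw [hS_def] at hmem
            simp only [mem_setOf_eq] at hmem
            rw [← h] at hmem
            simp [hA0] at hmem
        have hGge : ENNReal.ofReal (c * t ^ (-α) * s) ≤ G t := by
          have hsub : ∀ x ∈ Ioo (0:ℝ) s, (t, x) ∈ S := by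
            intro x hx
            have hmaxs : max s 0 = s := max_eq_left hs0
            rw [hS_def] at hmem ⊢
            simp only [mem_setOf_eq] at hmem ⊢
            rw [hmaxs] at hmem
            rw [max_eq_left hx.1.le]
            have h1 : A x ≤ ENNReal.ofReal (x/s) * A s := by
              have h := hscale (x/s) s (div_nonneg hx.1.le hspos.le) ((div_le_one hspos).2 hx.2.le) hspos.le
              rwa [div_mul_cancel₀ _ hspos.ne'] at h
            have h2 : ENNReal.ofReal (x/s) * A s
                < ENNReal.ofReal (x/s) * ENNReal.ofReal (2*c*t ^ (-α)*s) := by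
              rw [ENNReal.mul_lt_mul_iff_right
                (ENNReal.ofReal_pos.mpr (div_pos hx.1 hspos)).ne' ENNReal.ofReal_ne_top]
              exact hmem
            calc A x ≤ _ := h1
              _ < _ := h2
              _ = ENNReal.ofReal (2*c*t ^ (-α)*x) := by
                  rw [← ENNReal.ofReal_mul (div_nonneg hx.1.le hspos.le)]
                  congr 1; field_simp
          calc ENNReal.ofReal (c * t ^ (-α) * s)
              = ENNReal.ofReal (c * t ^ (-α)) * ENNReal.ofReal s := by
                rw [← ENNReal.ofReal_mul (by positivity)]
            _ = ∫⁻ x in Ioo (0:ℝ) s, ENNReal.ofReal (c * t ^ (-α)) := by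
                rw [setLIntegral_const, Real.volume_Ioo, sub_zero]
            _ = ∫⁻ x in Ioo (0:ℝ) s, F (t, x) := by
                refine setLIntegral_congr_fun measurableSet_Ioo (fun x hx => ?_)
                rw [hF_def]
                exact (indicator_of_mem (hsub x hx)
                  (fun q => ENNReal.ofReal (c * q.1 ^ (-α)))).symm
            _ ≤ ∫⁻ x in Ioi (0:ℝ), F (t, x) :=
                lintegral_mono' (Measure.restrict_mono (fun x hx => hx.1) le_rfl) le_rfl
            _ = G t := by rw [hG_def]
        exact le_trans hGge (le_add_left le_rfl)
      · rw [hS_def] at hmem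
        simp only [mem_setOf_eq, not_lt] at hmem
        rw [max_eq_left hs0] at hmem
        have h1 : ENNReal.ofReal (c * t ^ (-α) * s) ≤ ENNReal.ofReal (2*c*t ^ (-α)*s) :=
          ENNReal.ofReal_le_ofReal
            (by linarith [mul_nonneg (mul_nonneg hc0.le htα.le) hs0])
        exact le_trans (h1.trans hmem) (le_add_right le_rfl)
    have hft : f t = lam * s := by rw [hs_def]; field_simp
    calc ENNReal.ofReal (t ^ (-α) * f t)
        = ENNReal.ofReal ((lam/c) * (c * t ^ (-α) * s)) := by
          rw [hft]; congr 1; field_simp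
      _ = ENNReal.ofReal (lam/c) * ENNReal.ofReal (c * t ^ (-α) * s) :=
          ENNReal.ofReal_mul (by positivity)
      _ ≤ ENNReal.ofReal (lam/c) * (A s + G t) := mul_le_mul_right hkey _
  -- inner bound for the double integral
  have hInner : ∀ x : ℝ, 0 < x → (∫⁻ t in Ioi (1:ℝ), F (t, x)) ≤
      (Ioc (0:ℝ) t₀).indicator (fun x => K * youngRatio A x ^ p) x := by
    intro x hx
    by_cases hxt : x ≤ t₀
    · rw [indicator_of_mem (mem_Ioc.mpr ⟨hx, hxt⟩)]
      by_cases hAx : A x = ⊤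
      · have hzero : ∀ t ∈ Ioi (1:ℝ), F (t, x) = 0 := by
          intro t ht
          rw [hF_def]
          apply indicator_of_notMem
          rw [hS_def]
          simp only [mem_setOf_eq, not_lt]
          rw [max_eq_left hx.le, hAx]
          exact le_top
        have h1 : (∫⁻ t in Ioi (1:ℝ), F (t, x)) = 0 := by
          rw [setLIntegral_congr_fun measurableSet_Ioi hzero]
          exact lintegral_zero
        rw [h1]; exact zero_le
      · set a := (A x).toReal with ha_def
        have ha0 : 0 < a := ENNReal.toReal_pos (hApos x hx) hAx
        set d := a / (2*c*x) with hd_def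
        have hd0 : 0 < d := by positivity
        set T := d ^ (-(1/α)) with hT_def
        have hT0 : 0 < T := Real.rpow_pos_of_pos hd0 _
        have hsub2 : ∀ t ∈ Ioi (1:ℝ), F (t, x) ≤
            (Ioo (0:ℝ) T).indicator (fun t => ENNReal.ofReal (c * t ^ (-α))) t := by
          intro t ht
          have ht1 : (1:ℝ) < t := ht
          rw [hF_def]
          by_cases hmem : (t, x) ∈ S
          · rw [indicator_of_mem hmem]
            have htT : t ∈ Ioo (0:ℝ) T := by
              refine ⟨by linarith, ?_⟩
              rw [hS_def] at hmem
              simp only [mem_setOf_eq] at hmem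
              rw [max_eq_left hx.le] at hmem
              have h3 : a < 2*c*t ^ (-α)*x := (ENNReal.lt_ofReal_iff_toReal_lt hAx).1 hmem
              have h4 : d < t ^ (-α) := by
                rw [hd_def, div_lt_iff₀ (by positivity)]
                nlinarith
              have hneg : -(1/α) < 0 := by
                have := one_div_pos.mpr hα0; linarith
              have h5 : (t ^ (-α)) ^ (-(1/α)) < d ^ (-(1/α)) :=
                Real.rpow_lt_rpow_of_neg hd0 h4 hneg
              have h6 : (t ^ (-α)) ^ (-(1/α)) = t := by
                rw [← Real.rpow_mul (by linarith : (0:ℝ) ≤ t),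
                  show (-α) * (-(1/α)) = 1 by
                    rw [neg_mul_neg, mul_one_div, div_self hα0.ne'], Real.rpow_one]
              rw [h6] at h5
              exact h5
            rw [indicator_of_mem htT]
          · rw [indicator_of_notMem hmem]
            exact zero_le
        have hTval : c * (T ^ (1-α) / (1-α)) = c * (2*c)^p/(1-α) * ((x/a)^p) := by
          have h7 : T ^ (1-α) = d ^ (-p) := by
            rw [hT_def, ← Real.rpow_mul hd0.le, hep]
          have h8 : d ^ (-p) = (2*c)^p * (x/a)^p := by
            rw [Real.rpow_neg hd0.le, ← Real.inv_rpow hd0.le,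
              show d⁻¹ = (2*c) * (x/a) by rw [hd_def]; field_simp,
              Real.mul_rpow (by positivity) (by positivity)]
          rw [h7, h8]; ring
        calc (∫⁻ t in Ioi (1:ℝ), F (t, x))
            ≤ ∫⁻ t in Ioi (1:ℝ),
                (Ioo (0:ℝ) T).indicator (fun t => ENNReal.ofReal (c * t ^ (-α))) t :=
              lintegral_mono_ae (ae_restrict_of_forall_mem measurableSet_Ioi hsub2)
          _ ≤ ∫⁻ t, (Ioo (0:ℝ) T).indicator (fun t => ENNReal.ofReal (c * t ^ (-α))) t :=
              lintegral_mono' Measure.restrict_le_self le_rfl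
          _ = ∫⁻ t in Ioo (0:ℝ) T, ENNReal.ofReal (c * t ^ (-α)) :=
              lintegral_indicator measurableSet_Ioo _
          _ ≤ ENNReal.ofReal (c * (T ^ (1-α) / (1-α))) :=
              aux_lint_rpow c α T hc0.le hα0 hα1 hT0
          _ = K * youngRatio A x ^ p := by
              rw [hTval, ENNReal.ofReal_mul (by positivity), hK_def,
                ← ENNReal.ofReal_rpow_of_nonneg (by positivity) hp0.le,
                ENNReal.ofReal_div_of_pos ha0, ha_def, ENNReal.ofReal_toReal hAx]
              rfl
    · -- x > t₀ : integrand vanishes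
      have hzero : ∀ t ∈ Ioi (1:ℝ), F (t, x) = 0 := by
        intro t ht
        have ht1 : (1:ℝ) < t := ht
        rw [hF_def]
        apply indicator_of_notMem
        rw [hS_def]
        simp only [mem_setOf_eq, not_lt]
        rw [max_eq_left hx.le]
        have h2 : t ^ (-α) ≤ 1 :=
          Real.rpow_le_one_of_one_le_of_nonpos ht1.le (by linarith)
        have h1 : 2*c*t ^ (-α)*x ≤ 2*c*x := by
          linarith [mul_le_mul_of_nonneg_left h2 (show (0:ℝ) ≤ 2*c*x by positivity)]
        exact le_trans (ENNReal.ofReal_le_ofReal h1) (hbig x (lt_of_not_ge hxt))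
      have h1 : (∫⁻ t in Ioi (1:ℝ), F (t, x)) = 0 := by
        rw [setLIntegral_congr_fun measurableSet_Ioi hzero]
        exact lintegral_zero
      rw [h1]
      exact zero_le
  -- bound on ∫ G
  have hJ : (∫⁻ t in Ioi (1:ℝ), G t) ≤ K * I₀ := by
    calc (∫⁻ t in Ioi (1:ℝ), G t)
        = ∫⁻ x in Ioi (0:ℝ), ∫⁻ t in Ioi (1:ℝ), F (t, x) := by
          rw [hG_def]
          exact lintegral_lintegral_swap hFmeas.aemeasurable
      _ ≤ ∫⁻ x in Ioi (0:ℝ), (Ioc (0:ℝ) t₀).indicator (fun x => K * youngRatio A x ^ p) x :=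
          lintegral_mono_ae (ae_restrict_of_forall_mem measurableSet_Ioi hInner)
      _ = ∫⁻ x in Ioc (0:ℝ) t₀, K * youngRatio A x ^ p := by
          rw [lintegral_indicator measurableSet_Ioc,
            Measure.restrict_restrict measurableSet_Ioc,
            inter_eq_self_of_subset_left Ioc_subset_Ioi_self]
      _ = ∫⁻ x in Ioo (0:ℝ) t₀, K * youngRatio A x ^ p :=
          (setLIntegral_congr Ioo_ae_eq_Ioc).symm
      _ = K * I₀ := by rw [hI₀_def]; exact lintegral_const_mul' K _ ENNReal.ofReal_ne_top
  -- final assembly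
  refine ⟨ENNReal.ofReal (2/c) * (1 + K * I₀), ?_, ?_⟩
  · exact ENNReal.mul_ne_top ENNReal.ofReal_ne_top
      (ENNReal.add_ne_top.mpr ⟨ENNReal.one_ne_top,
        ENNReal.mul_ne_top ENNReal.ofReal_ne_top hI₀.ne⟩)
  intro f hf hlux
  have h2 : luxNorm A (volume.restrict (Ioi (0:ℝ))) f < 2 :=
    lt_of_le_of_lt hlux ENNReal.one_lt_two
  rw [luxNorm, sInf_lt_iff] at h2
  obtain ⟨l, ⟨lam, hlam0, hl, hmod⟩, hl2⟩ := h2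
  rw [hl] at hl2
  have hlam2 : lam ≤ 2 := by
    by_contra hcon
    push_neg at hcon
    have : (2:ℝ≥0∞) ≤ ENNReal.ofReal lam := by
      rw [show (2:ℝ≥0∞) = ENNReal.ofReal 2 by norm_num]
      exact ENNReal.ofReal_le_ofReal hcon.le
    exact absurd hl2 (not_lt.mpr this)
  have hmain : ∀ t ∈ Ioi (1:ℝ), ENNReal.ofReal (t ^ ((m:ℝ)/n - 1) * f t)
      ≤ ENNReal.ofReal (lam / c) * (A (|f t| / lam) + G t) := by
    intro t ht
    rw [hexp, abs_of_nonneg (hf t)]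
    exact hYoung lam hlam0 f hf t ht
  have hmod' : (∫⁻ t in Ioi (1:ℝ), A (|f t| / lam)) ≤ 1 :=
    le_trans (lintegral_mono' (Measure.restrict_mono
      (Ioi_subset_Ioi (by norm_num)) le_rfl) le_rfl) hmod
  calc (∫⁻ t in Ioi (1:ℝ), ENNReal.ofReal (t ^ ((m:ℝ)/n - 1) * f t))
      ≤ ∫⁻ t in Ioi (1:ℝ), ENNReal.ofReal (lam/c) * (A (|f t|/lam) + G t) :=
        lintegral_mono_ae (ae_restrict_of_forall_mem measurableSet_Ioi hmain)
    _ = ENNReal.ofReal (lam/c) * ∫⁻ t in Ioi (1:ℝ), (A (|f t|/lam) + G t) :=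
        lintegral_const_mul' _ _ ENNReal.ofReal_ne_top
    _ = ENNReal.ofReal (lam/c) *
        ((∫⁻ t in Ioi (1:ℝ), A (|f t|/lam)) + ∫⁻ t in Ioi (1:ℝ), G t) := by
        rw [lintegral_add_right _ hGmeas]
    _ ≤ ENNReal.ofReal (2/c) * (1 + K * I₀) := by
        apply mul_le_mul'
        · apply ENNReal.ofReal_le_ofReal
          gcongr
        · exact add_le_add hmod' hJ
end
end
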